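/- arXiv:1701.04648 — 8 statements merged into one kernel-verified Lean document; each statement's English description precedes it below -/
import Mathlib

section
/- For the complete bipartite graph K_{m,n}: if m = n = 2 or m = n ≥ 4 then the equitable nsd-index of K_{m,n} equals 2; the equitable nsd-index of K_{3,3} equals 3; and if 1 ≤ m < n then the equitable nsd-index of K_{m,n} equals 1. -/
open Finset

variable {V : Type*} [Fintype V] [DecidableEq V]

/-- The vertex sum at `v` induced by an edge colouring `γ`:
the sum of the colours of the edges incident with `v`. -/
def vSum (G : SimpleGraph V) [DecidableRel G.Adj] (γ : Sym2 V → ℕ) (v : V) : ℕ :=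
  ∑ u ∈ G.neighborFinset v, γ s(v, u)

/-- `γ` is an edge `k`-colouring: every edge gets a colour in `{1, …, k}`. -/
def IsEdgeKColoring (G : SimpleGraph V) (k : ℕ) (γ : Sym2 V → ℕ) : Prop :=
  ∀ e ∈ G.edgeSet, 1 ≤ γ e ∧ γ e ≤ k

/-- `γ` is a neighbour-sum-distinguishing edge colouring. -/
def NsdEdge (G : SimpleGraph V) [DecidableRel G.Adj] (γ : Sym2 V → ℕ) : Prop :=
  ∀ ⦃u v : V⦄, G.Adj u v → vSum G γ u ≠ vSum G γ v

/-- The number of edges of `G` coloured `i` by `γ`. -/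
def edgeClassCard (G : SimpleGraph V) [DecidableRel G.Adj] (γ : Sym2 V → ℕ) (i : ℕ) : ℕ :=
  (G.edgeFinset.filter fun e => γ e = i).card

/-- `γ` is equitable as an edge `k`-colouring: any two colour classes among
`{1, …, k}` have sizes differing by at most one. -/
def EquitableEdge (G : SimpleGraph V) [DecidableRel G.Adj] (k : ℕ) (γ : Sym2 V → ℕ) : Prop :=
  ∀ i ∈ Finset.Icc 1 k, ∀ j ∈ Finset.Icc 1 k,
    edgeClassCard G γ i ≤ edgeClassCard G γ j + 1

/-- `G` admits an equitable neighbour-sum-distinguishing edge `k`-colouring. -/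
def HasEqNsdEdge (G : SimpleGraph V) [DecidableRel G.Adj] (k : ℕ) : Prop :=
  ∃ γ : Sym2 V → ℕ, IsEdgeKColoring G k γ ∧ NsdEdge G γ ∧ EquitableEdge G k γ

instance {W X : Type*} : DecidableRel (completeBipartiteGraph W X).Adj := fun a b =>
  inferInstanceAs (Decidable ((a.isLeft ∧ b.isRight) ∨ (a.isRight ∧ b.isLeft)))


/-! Colour every edge of `K_{n,n}` by `2` or `1` according to whether it lies in a set `S`. The
sum at a vertex is then `n` plus its number of `S`-edges, so `S` must give every row a count that
no column has, while containing half of the edges up to one. For `n = 2m` take the first `m`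
rows (row counts `0, 2m`, column counts `m`); for `n = 2m + 1` with `m ≥ 2` take the first `m`
rows together with the edges `(j + m, j)` (row counts `2m + 1, 1`, column counts `m, m + 1`).
For `K_{3,3}` a search over all `2⁹` sets shows that no `S` works, while rows `(1,1,2), (2,2,1),
(3,3,3)` give an equitable `3`-colouring. With a single colour the vertex sums are the sizes of
the opposite parts, so they distinguish exactly when `m ≠ n`. -/

section CompleteBipartite

variable {W X : Type*} [Fintype W] [Fintype X]

lemma vSum_completeBipartiteGraph_inl (γ : Sym2 (W ⊕ X) → ℕ) (w : W) :
    vSum (completeBipartiteGraph W X) γ (.inl w) = ∑ x, γ s(.inl w, .inr x) := by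
  have : (completeBipartiteGraph W X).neighborFinset (.inl w) = univ.map .inr := by
    ext (_ | _) <;> simp
  rw [vSum, this, sum_map]
  rfl

lemma vSum_completeBipartiteGraph_inr (γ : Sym2 (W ⊕ X) → ℕ) (x : X) :
    vSum (completeBipartiteGraph W X) γ (.inr x) = ∑ w, γ s(.inl w, .inr x) := by
  have : (completeBipartiteGraph W X).neighborFinset (.inr x) = univ.map .inl := by
    ext (_ | _) <;> simp
  rw [vSum, this, sum_map]
  exact sum_congr rfl fun w _ => congrArg γ Sym2.eq_swap

lemma edgeFinset_completeBipartiteGraph [DecidableEq W] [DecidableEq X] :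
    (completeBipartiteGraph W X).edgeFinset =
      univ.image fun p : W × X => s(.inl p.1, .inr p.2) := by
  rw [← coe_inj, SimpleGraph.coe_edgeFinset, SimpleGraph.edgeSet_completeBipartiteGraph,
    coe_image, coe_univ, Set.image_univ]

lemma edgeClassCard_completeBipartiteGraph [DecidableEq W] [DecidableEq X]
    (γ : Sym2 (W ⊕ X) → ℕ) (c : ℕ) :
    edgeClassCard (completeBipartiteGraph W X) γ c =
      #{p : W × X | γ s(.inl p.1, .inr p.2) = c} := by
  rw [edgeClassCard, edgeFinset_completeBipartiteGraph, filter_image, card_image_of_injective]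
  intro p q h
  simpa [Prod.ext_iff] using h

/-- `M w x` is the colour of the edge `wx` of `K_{W,X}`. -/
def IsEqNsdMatrix (k : ℕ) (M : W → X → ℕ) : Prop :=
  (∀ w x, M w x ∈ Icc 1 k) ∧ (∀ w x, ∑ x', M w x' ≠ ∑ w', M w' x) ∧
    ∀ a ∈ Icc 1 k, ∀ b ∈ Icc 1 k,
      #{p : W × X | M p.1 p.2 = a} ≤ #{p : W × X | M p.1 p.2 = b} + 1

lemma isEqNsd_iff_isEqNsdMatrix [DecidableEq W] [DecidableEq X] (k : ℕ)
    (γ : Sym2 (W ⊕ X) → ℕ) :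
    (IsEdgeKColoring (completeBipartiteGraph W X) k γ ∧ NsdEdge (completeBipartiteGraph W X) γ ∧
      EquitableEdge (completeBipartiteGraph W X) k γ) ↔
    IsEqNsdMatrix k fun w x => γ s(.inl w, .inr x) := by
  refine and_congr ?_ (and_congr ?_ ?_)
  · simp only [IsEdgeKColoring, SimpleGraph.edgeSet_completeBipartiteGraph, Set.forall_mem_range,
      Prod.forall, mem_Icc]
  · constructor
    · intro h w x
      simpa only [vSum_completeBipartiteGraph_inl, vSum_completeBipartiteGraph_inr] using
        h (u := .inl w) (v := .inr x) (by simp)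
    · rintro h (w | x) (w' | x') hadj <;> simp at hadj
      · rw [vSum_completeBipartiteGraph_inl, vSum_completeBipartiteGraph_inr]
        exact h w x'
      · rw [vSum_completeBipartiteGraph_inr, vSum_completeBipartiteGraph_inl]
        exact (h w' x).symm
  · simp only [EquitableEdge, edgeClassCard_completeBipartiteGraph]

def edgeColoringOfMatrix (M : W → X → ℕ) : Sym2 (W ⊕ X) → ℕ :=
  Sym2.lift ⟨fun u v => match u, v with
    | .inl w, .inr x => M w x
    | .inr x, .inl w => M w x
    | _, _ => 0,
    by rintro (_ | _) (_ | _) <;> rfl⟩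

theorem hasEqNsdEdge_completeBipartiteGraph_iff [DecidableEq W] [DecidableEq X] (k : ℕ) :
    HasEqNsdEdge (completeBipartiteGraph W X) k ↔ ∃ M : W → X → ℕ, IsEqNsdMatrix k M :=
  ⟨fun ⟨γ, hγ⟩ => ⟨_, (isEqNsd_iff_isEqNsdMatrix k γ).1 hγ⟩,
    fun ⟨M, hM⟩ => ⟨edgeColoringOfMatrix M, (isEqNsd_iff_isEqNsdMatrix k _).2 hM⟩⟩

end CompleteBipartite

namespace IsEqNsdMatrix

variable {W X : Type*} [Fintype W] [Fintype X] {k : ℕ} {M : W → X → ℕ}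

lemma one_le [Nonempty W] [Nonempty X] (hM : IsEqNsdMatrix k M) : 1 ≤ k :=
  have ⟨w⟩ := ‹Nonempty W›
  have ⟨x⟩ := ‹Nonempty X›
  (mem_Icc.1 (hM.1 w x)).1.trans (mem_Icc.1 (hM.1 w x)).2

lemma two_le_of_card_eq [Nonempty W] [Nonempty X] (hWX : Fintype.card W = Fintype.card X)
    (hM : IsEqNsdMatrix k M) : 2 ≤ k := by
  obtain ⟨w⟩ := ‹Nonempty W›
  obtain ⟨x⟩ := ‹Nonempty X›
  by_contra hk
  have hM1 : ∀ w x, M w x = 1 := fun w x => by have := mem_Icc.1 (hM.1 w x); omega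
  apply hM.2.1 w x
  simp [hM1, hWX]

end IsEqNsdMatrix

lemma isEqNsdMatrix_one_of_card_ne {W X : Type*} [Fintype W] [Fintype X]
    (hWX : Fintype.card W ≠ Fintype.card X) : IsEqNsdMatrix 1 fun (_ : W) (_ : X) => 1 := by
  refine ⟨fun _ _ => by simp, fun _ _ => by simpa using hWX.symm, ?_⟩
  simp only [Icc_self, mem_singleton]
  rintro _ rfl _ rfl
  exact Nat.le_succ _

section TwoColourings

variable {W X : Type*} [Fintype W] [Fintype X]

/-- `S` marks the edges coloured `2`; the others are coloured `1`. -/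
def IsEqNsdPattern (S : W → X → Bool) : Prop :=
  (∀ w x, Fintype.card X + #{x' | S w x'} ≠ Fintype.card W + #{w' | S w' x}) ∧
    Fintype.card W * Fintype.card X ≤ 2 * #{p : W × X | S p.1 p.2} + 1 ∧
    2 * #{p : W × X | S p.1 p.2} ≤ Fintype.card W * Fintype.card X + 1

lemma sum_ite_two_one {ι : Type*} (s : Finset ι) (p : ι → Prop) [DecidablePred p] :
    ∑ i ∈ s, (if p i then 2 else 1) = #s + #{i ∈ s | p i} := by
  rw [sum_ite, sum_const, sum_const, smul_eq_mul, smul_eq_mul, mul_one,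
    ← card_filter_add_card_filter_not (s := s) p]
  ring

lemma isEqNsdMatrix_two_iff (S : W → X → Bool) :
    IsEqNsdMatrix 2 (fun w x => if S w x then 2 else 1) ↔ IsEqNsdPattern S := by
  have hsplit := card_filter_add_card_filter_not (s := (univ : Finset (W × X)))
    fun p => S p.1 p.2
  have hclass (a : ℕ) (ha : a ∈ Icc 1 2) :
      #{p : W × X | (if S p.1 p.2 then 2 else 1) = a} =
        if a = 2 then #{p : W × X | S p.1 p.2} else #{p : W × X | ¬ S p.1 p.2} := by
    obtain ⟨ha1, ha2⟩ := mem_Icc.1 ha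
    interval_cases a <;> simp
  simp only [IsEqNsdMatrix, IsEqNsdPattern, sum_ite_two_one, card_univ]
  refine (and_iff_right fun w x => by split <;> simp).trans (and_congr Iff.rfl ?_)
  simp only [card_univ, Fintype.card_prod] at hsplit
  constructor
  · intro h
    have h12 := h 1 (by simp) 2 (by simp)
    have h21 := h 2 (by simp) 1 (by simp)
    rw [hclass 1 (by simp), hclass 2 (by simp)] at h12 h21
    simp only [if_true, OfNat.one_ne_ofNat, if_false] at h12 h21
    omega
  · intro h a ha b hb
    rw [hclass a ha, hclass b hb]
    split_ifs <;> omega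

theorem exists_isEqNsdMatrix_two_iff :
    (∃ M : W → X → ℕ, IsEqNsdMatrix 2 M) ↔ ∃ S : W → X → Bool, IsEqNsdPattern S := by
  refine ⟨fun ⟨M, hM⟩ => ⟨fun w x => M w x == 2, (isEqNsdMatrix_two_iff _).1 ?_⟩,
    fun ⟨S, hS⟩ => ⟨_, (isEqNsdMatrix_two_iff S).2 hS⟩⟩
  convert hM using 3 with w x
  have := mem_Icc.1 (hM.1 w x)
  by_cases h : M w x = 2 <;> simp [h]
  omega

end TwoColourings

set_option maxRecDepth 10000 in
lemma not_isEqNsdPattern_fin_three (S : Fin 3 → Fin 3 → Bool) : ¬ IsEqNsdPattern S := by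
  revert S
  unfold IsEqNsdPattern
  decide

lemma isEqNsdMatrix_fin_three : IsEqNsdMatrix 3 ![![1, 1, 2], ![2, 2, 1], ![3, 3, 3]] := by
  unfold IsEqNsdMatrix
  decide

section Constructions

lemma card_filter_prod_eq_sum {W X : Type*} [Fintype W] [Fintype X] (P : W → X → Prop)
    [∀ w x, Decidable (P w x)] : #{p : W × X | P p.1 p.2} = ∑ w, #{x | P w x} := by
  simp only [card_filter, Fintype.sum_prod_type]

lemma sum_fin_ite_val_lt (n m a b : ℕ) (hmn : m ≤ n) :
    ∑ i : Fin n, (if (i : ℕ) < m then a else b) = m * a + (n - m) * b := by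
  have hlt : #{i : Fin n | (i : ℕ) < m} = m := by simp [Fin.card_filter_val_lt, hmn]
  have hge := card_filter_add_card_filter_not (s := (univ : Finset (Fin n)))
    fun i => (i : ℕ) < m
  rw [card_univ, Fintype.card_fin, hlt] at hge
  rw [sum_ite, sum_const, sum_const, smul_eq_mul, smul_eq_mul, hlt]
  congr 2
  omega

variable {m : ℕ}

lemma isEqNsdPattern_even (hm : 1 ≤ m) :
    IsEqNsdPattern fun (i _ : Fin (2 * m)) => decide ((i : ℕ) < m) := by
  have hrow (i : Fin (2 * m)) :
      #{j : Fin (2 * m) | decide ((i : ℕ) < m)} = if (i : ℕ) < m then 2 * m else 0 := by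
    split_ifs with h <;> simp [h]
  have hcol : #{i : Fin (2 * m) | decide ((i : ℕ) < m)} = m := by
    simp [Fin.card_filter_val_lt]; omega
  have htotal : #{p : Fin (2 * m) × Fin (2 * m) | decide ((p.1 : ℕ) < m)} = m * (2 * m) := by
    rw [card_filter_prod_eq_sum fun (i _ : Fin (2 * m)) => decide ((i : ℕ) < m) = true,
      Fintype.sum_congr _ _ hrow, sum_fin_ite_val_lt _ _ _ _ (by omega)]
    ring
  refine ⟨fun i j => ?_, ?_⟩
  · simp only [Fintype.card_fin, hrow, hcol]
    split_ifs <;> omega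
  · simp only [Fintype.card_fin, htotal]
    constructor <;> nlinarith

lemma isEqNsdPattern_odd (hm : 2 ≤ m) :
    IsEqNsdPattern fun (i j : Fin (2 * m + 1)) => decide ((i : ℕ) < m ∨ (i : ℕ) = j + m) := by
  have hrow (i : Fin (2 * m + 1)) :
      #{j : Fin (2 * m + 1) | decide ((i : ℕ) < m ∨ (i : ℕ) = j + m)} =
        if (i : ℕ) < m then 2 * m + 1 else 1 := by
    split_ifs with h
    · simp [h]
    · rw [card_eq_one]
      exact ⟨⟨i - m, by omega⟩, by ext j; simp [Fin.ext_iff]; omega⟩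
  have hcol (j : Fin (2 * m + 1)) :
      m ≤ #{i : Fin (2 * m + 1) | decide ((i : ℕ) < m ∨ (i : ℕ) = j + m)} ∧
        #{i : Fin (2 * m + 1) | decide ((i : ℕ) < m ∨ (i : ℕ) = j + m)} ≤ m + 1 := by
    have hlt : #{i : Fin (2 * m + 1) | (i : ℕ) < m} = m := by
      simp [Fin.card_filter_val_lt]; omega
    have hdiag : #{i : Fin (2 * m + 1) | (i : ℕ) = j + m} ≤ 1 :=
      card_le_one.2 fun a ha b hb => by
        simp only [mem_filter] at ha hb
        exact Fin.ext (ha.2.trans hb.2.symm)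
    simp only [decide_eq_true_eq, filter_or]
    constructor
    · exact hlt.symm.le.trans (card_le_card subset_union_left)
    · exact (card_union_le _ _).trans (by omega)
  have htotal : #{p : Fin (2 * m + 1) × Fin (2 * m + 1) |
      decide ((p.1 : ℕ) < m ∨ (p.1 : ℕ) = p.2 + m)} = m * (2 * m + 1) + (m + 1) := by
    rw [card_filter_prod_eq_sum
        fun (i j : Fin (2 * m + 1)) => decide ((i : ℕ) < m ∨ (i : ℕ) = j + m) = true,
      Fintype.sum_congr _ _ hrow, sum_fin_ite_val_lt _ _ _ _ (by omega)]
    omega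
  refine ⟨fun i j => ?_, ?_⟩
  · have := hcol j
    simp only [Fintype.card_fin, hrow]
    split_ifs <;> omega
  · simp only [Fintype.card_fin, htotal]
    constructor <;> nlinarith

end Constructions

/-- The equitable nsd-index of the complete bipartite graph `K_{m,n}`:
it equals `2` when `m = n = 2` or `m = n ≥ 4`, it equals `3` for `K_{3,3}`,
and it equals `1` when `1 ≤ m < n`. -/
theorem equitable_nsd_index_completeBipartiteGraph :
    (∀ n : ℕ, n = 2 ∨ 4 ≤ n →
      IsLeast {k : ℕ | HasEqNsdEdge (completeBipartiteGraph (Fin n) (Fin n)) k} 2) ∧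
    IsLeast {k : ℕ | HasEqNsdEdge (completeBipartiteGraph (Fin 3) (Fin 3)) k} 3 ∧
    (∀ m n : ℕ, 1 ≤ m → m < n →
      IsLeast {k : ℕ | HasEqNsdEdge (completeBipartiteGraph (Fin m) (Fin n)) k} 1) := by
  simp only [IsLeast, lowerBounds, Set.mem_ofPred_eq, hasEqNsdEdge_completeBipartiteGraph_iff]
  refine ⟨fun n hn => ⟨?_, ?_⟩, ⟨⟨_, isEqNsdMatrix_fin_three⟩, ?_⟩, fun m n hm hmn => ⟨?_, ?_⟩⟩
  · rw [exists_isEqNsdMatrix_two_iff]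
    obtain ⟨m, rfl | rfl⟩ := Nat.even_or_odd' n
    · exact ⟨_, isEqNsdPattern_even (by omega)⟩
    · exact ⟨_, isEqNsdPattern_odd (by omega)⟩
  · have : Nonempty (Fin n) := Fin.pos_iff_nonempty.1 (by omega)
    exact fun k ⟨M, hM⟩ => hM.two_le_of_card_eq rfl
  · rintro k ⟨M, hM⟩
    refine (hM.two_le_of_card_eq rfl).lt_of_ne' fun hk => ?_
    subst hk
    obtain ⟨S, hS⟩ := exists_isEqNsdMatrix_two_iff.1 ⟨M, hM⟩
    exact not_isEqNsdPattern_fin_three S hS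
  · exact ⟨_, isEqNsdMatrix_one_of_card_ne (by simp; omega)⟩
  · have : Nonempty (Fin m) := Fin.pos_iff_nonempty.1 hm
    have : Nonempty (Fin n) := Fin.pos_iff_nonempty.1 (by omega)
    exact fun k ⟨M, hM⟩ => hM.one_le
end

section
/- For every integer n ≥ 3, the complete graph K_n admits no equitable neighbour-sum-distinguishing edge 2-colouring; equivalently, the equitable nsd-index of K_n is at least 3. -/
open Finset

variable {V : Type*} [Fintype V] [DecidableEq V]

instance {W : Type*} [DecidableEq W] : DecidableRel (SimpleGraph.completeGraph W).Adj := fun a b =>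
  inferInstanceAs (Decidable (a ≠ b))

/-
Colour the edges of `K_n` with `1` and `2` and let `d v` be the number of edges of colour `2`
at `v`, so that the vertex sum at `v` is `(n - 1) + d v`. In `K_n` every two vertices are
adjacent, so a neighbour-sum-distinguishing colouring makes `d` injective, and as
`d v ≤ n - 1` it takes every value in `{0, …, n - 1}`. A vertex `a` with `d a = 0` and a vertex
`b` with `d b = n - 1` are then distinct, and the edge `ab` would have to be coloured both `1`
and `2`. So `K_n` has no neighbour-sum-distinguishing edge colouring with colours in `{1, 2}`
at all, equitable or not.
-/

open SimpleGraph

section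

omit [DecidableEq V]

theorem Finset.image_univ_eq_range_of_injective {f : V → ℕ} (hf : Function.Injective f)
    (hlt : ∀ v, f v < Fintype.card V) : univ.image f = range (Fintype.card V) :=
  eq_of_subset_of_card_le (fun x hx => by obtain ⟨v, -, rfl⟩ := mem_image.mp hx; simpa using hlt v)
    (by rw [card_range, card_image_of_injective _ hf, card_univ])

def colourDegree (G : SimpleGraph V) [DecidableRel G.Adj] (γ : Sym2 V → ℕ) (i : ℕ) (v : V) :
    ℕ :=
  #{u ∈ G.neighborFinset v | γ s(v, u) = i}

omit [Fintype V] in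
theorem IsEdgeKColoring.mono {G : SimpleGraph V} {k l : ℕ} {γ : Sym2 V → ℕ}
    (hγ : IsEdgeKColoring G k γ) (hkl : k ≤ l) : IsEdgeKColoring G l γ :=
  fun e he => ⟨(hγ e he).1, (hγ e he).2.trans hkl⟩

theorem vSum_eq_degree_add_colourDegree_two {G : SimpleGraph V} [DecidableRel G.Adj]
    {γ : Sym2 V → ℕ} (hγ : IsEdgeKColoring G 2 γ) (v : V) :
    vSum G γ v = G.degree v + colourDegree G γ 2 v := by
  have hcolour : ∀ u ∈ G.neighborFinset v, γ s(v, u) = 1 + if γ s(v, u) = 2 then 1 else 0 := by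
    intro u hu
    have := hγ s(v, u) ((mem_neighborFinset G v u).mp hu)
    split_ifs <;> omega
  rw [vSum, sum_congr rfl hcolour, sum_add_distrib, sum_const, smul_eq_mul, mul_one,
    sum_boole, Nat.cast_id, card_neighborFinset_eq_degree, colourDegree]

theorem colourDegree_le_degree (G : SimpleGraph V) [DecidableRel G.Adj] (γ : Sym2 V → ℕ)
    (i : ℕ) (v : V) : colourDegree G γ i v ≤ G.degree v :=
  card_filter_le _ _

theorem colourDegree_eq_zero_iff {G : SimpleGraph V} [DecidableRel G.Adj] {γ : Sym2 V → ℕ}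
    {i : ℕ} {v : V} : colourDegree G γ i v = 0 ↔ ∀ u, G.Adj v u → γ s(v, u) ≠ i := by
  simp [colourDegree]

theorem colourDegree_eq_degree_iff {G : SimpleGraph V} [DecidableRel G.Adj] {γ : Sym2 V → ℕ}
    {i : ℕ} {v : V} : colourDegree G γ i v = G.degree v ↔ ∀ u, G.Adj v u → γ s(v, u) = i := by
  simp [colourDegree, ← card_neighborFinset_eq_degree, card_filter_eq_iff]

end

theorem degree_completeGraph (v : V) : (completeGraph V).degree v = Fintype.card V - 1 := by
  have : (completeGraph V).neighborFinset v = {v}ᶜ := by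
    ext u
    simp [ne_comm]
  rw [← card_neighborFinset_eq_degree, this, card_compl, card_singleton]

theorem NsdEdge.injective_completeGraph {γ : Sym2 V → ℕ} (hγ : NsdEdge (completeGraph V) γ) :
    Function.Injective (vSum (completeGraph V) γ) := by
  intro u v huv
  by_contra hne
  exact hγ hne huv

theorem completeGraph_not_nsdEdge [Nontrivial V] {γ : Sym2 V → ℕ}
    (hγ : IsEdgeKColoring (completeGraph V) 2 γ) : ¬ NsdEdge (completeGraph V) γ := by
  intro hnsd
  set d := colourDegree (completeGraph V) γ 2
  have hcard : 2 ≤ Fintype.card V := Fintype.one_lt_card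
  have hd_lt : ∀ v, d v < Fintype.card V := fun v =>
    (colourDegree_le_degree _ γ 2 v).trans_lt (by rw [degree_completeGraph]; omega)
  have hd_inj : Function.Injective d := fun u v huv => hnsd.injective_completeGraph <| by
    rw [vSum_eq_degree_add_colourDegree_two hγ, vSum_eq_degree_add_colourDegree_two hγ,
      degree_completeGraph, degree_completeGraph]
    exact congrArg _ huv
  have hd_surj : ∀ m < Fintype.card V, ∃ v, d v = m := fun m hm => by
    simpa using (image_univ_eq_range_of_injective hd_inj hd_lt).ge (mem_range.mpr hm)
  obtain ⟨a, ha⟩ := hd_surj 0 (by omega)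
  obtain ⟨b, hb⟩ := hd_surj (Fintype.card V - 1) (by omega)
  have hab : a ≠ b := by rintro rfl; omega
  have hab_ne_two := colourDegree_eq_zero_iff.mp ha b hab
  have hba_two := colourDegree_eq_degree_iff.mp (hb.trans (degree_completeGraph b).symm) a hab.symm
  exact hab_ne_two (Sym2.eq_swap ▸ hba_two)

/-- For every `n ≥ 3`, the complete graph `K_n` admits no equitable
neighbour-sum-distinguishing edge `2`-colouring; equivalently, its equitable
nsd-index is at least `3`. -/
theorem completeGraph_no_equitable_nsd_two (n : ℕ) (hn : 3 ≤ n) :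
    ¬ HasEqNsdEdge (SimpleGraph.completeGraph (Fin n)) 2 ∧
    ∀ k : ℕ, HasEqNsdEdge (SimpleGraph.completeGraph (Fin n)) k → 3 ≤ k := by
  have : Nontrivial (Fin n) := Fin.nontrivial_iff_two_le.mpr (by omega)
  have hk : ∀ k, HasEqNsdEdge (completeGraph (Fin n)) k → 3 ≤ k := by
    rintro k ⟨γ, hγ, hnsd, -⟩
    by_contra! hk
    exact completeGraph_not_nsdEdge (hγ.mono (by omega)) hnsd
  exact ⟨fun h2 => absurd (hk 2 h2) (by norm_num), hk⟩
end

section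
/- The complete graph K_4 admits no equitable neighbour-sum-distinguishing edge 3-colouring; together with the existence of an equitable nsd edge 4-colouring of K_4, this shows that the equitable nsd-index of K_4 equals 4. -/
open Finset

variable {V : Type*} [Fintype V] [DecidableEq V]

/-!
Six edges and three colours: an equitable colouring of `K₄` must use every colour exactly twice,
and a finite check of these colourings finds two vertices with equal sums. With at most two colours
the four distinct sums would be `3, 4, 5, 6`, so some vertex sees only colour `1` and another only
colour `2`, which is absurd for the edge between them. Colouring the edges `01, 02, 03, 12, 13, 23`
by `1, 2, 3, 4, 2, 4` is equitable, with vertex sums `6, 7, 10, 9`.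
-/

theorem Finset.eq_of_le_add_one_of_sum_eq {ι : Type*} {s : Finset ι} {f : ι → ℕ} {m : ℕ}
    (hf : ∀ i ∈ s, ∀ j ∈ s, f i ≤ f j + 1) (hsum : ∑ i ∈ s, f i = #s * m) :
    ∀ i ∈ s, f i = m := by
  have hconst : ∑ _i ∈ s, m = #s * m := by rw [sum_const, smul_eq_mul]
  intro i hi
  by_contra hne
  rcases Nat.lt_or_gt_of_ne hne with hlt | hgt
  · have : ∑ j ∈ s, f j < ∑ _j ∈ s, m :=
      sum_lt_sum (fun j hj => by have := hf j hj i hi; omega) ⟨i, hi, hlt⟩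
    omega
  · have : ∑ _j ∈ s, m < ∑ j ∈ s, f j :=
      sum_lt_sum (fun j hj => by have := hf i hi j hj; omega) ⟨i, hi, hgt⟩
    omega

section EdgeColouring

variable {W : Type*} [Fintype W] {G : SimpleGraph W} [DecidableRel G.Adj] {k : ℕ}
  {γ : Sym2 W → ℕ}

theorem IsEdgeKColoring.mem_Icc (hγ : IsEdgeKColoring G k γ) {e : Sym2 W}
    (he : e ∈ G.edgeFinset) : γ e ∈ Icc 1 k :=
  Finset.mem_Icc.2 (hγ e (SimpleGraph.mem_edgeFinset.1 he))

theorem IsEdgeKColoring.sum_edgeClassCard (hγ : IsEdgeKColoring G k γ) :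
    ∑ i ∈ Icc 1 k, edgeClassCard G γ i = #G.edgeFinset :=
  (card_eq_sum_card_fiberwise fun _ he => hγ.mem_Icc he).symm

theorem EquitableEdge.edgeClassCard_eq (hγ : IsEdgeKColoring G k γ) (heq : EquitableEdge G k γ)
    {m : ℕ} (hcard : #G.edgeFinset = k * m) : ∀ i ∈ Icc 1 k, edgeClassCard G γ i = m :=
  eq_of_le_add_one_of_sum_eq heq <| by
    rw [hγ.sum_edgeClassCard, hcard, Nat.card_Icc, Nat.add_sub_cancel]

end EdgeColouring

theorem vSum_completeGraph_add_diag (γ : Sym2 V → ℕ) (v : V) :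
    vSum (SimpleGraph.completeGraph V) γ v + γ s(v, v) = ∑ u, γ s(v, u) := by
  rw [vSum, ← sum_erase_add _ _ (mem_univ v)]
  congr 2
  ext u
  simp [eq_comm]

theorem nsdEdge_completeGraph_iff (γ : Sym2 V → ℕ) :
    NsdEdge (SimpleGraph.completeGraph V) γ ↔
      Function.Injective (vSum (SimpleGraph.completeGraph V) γ) :=
  ⟨fun h _ _ huv => by_contra fun hne => h hne huv, fun h _ _ hadj huv => hadj (h huv)⟩

namespace K4

abbrev graph : SimpleGraph (Fin 4) := SimpleGraph.completeGraph (Fin 4)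

/-- The vertex sums of `K₄` when its edges `01, 02, 03, 12, 13, 23` get the colours
`a, b, c, d, e, f`. -/
def vertexSums (a b c d e f : ℕ) : Fin 4 → ℕ :=
  ![a + b + c, a + d + e, b + d + f, c + e + f]

theorem vSum_eq (γ : Sym2 (Fin 4) → ℕ) :
    vSum graph γ =
      vertexSums (γ s(0, 1)) (γ s(0, 2)) (γ s(0, 3)) (γ s(1, 2)) (γ s(1, 3)) (γ s(2, 3)) := by
  have h10 : s((1 : Fin 4), 0) = s(0, 1) := Sym2.eq_swap
  have h20 : s((2 : Fin 4), 0) = s(0, 2) := Sym2.eq_swap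
  have h30 : s((3 : Fin 4), 0) = s(0, 3) := Sym2.eq_swap
  have h21 : s((2 : Fin 4), 1) = s(1, 2) := Sym2.eq_swap
  have h31 : s((3 : Fin 4), 1) = s(1, 3) := Sym2.eq_swap
  have h32 : s((3 : Fin 4), 2) = s(2, 3) := Sym2.eq_swap
  funext v
  have := vSum_completeGraph_add_diag γ v
  fin_cases v <;>
    simp [vertexSums, Fin.sum_univ_four, h10, h20, h30, h21, h31, h32] at this ⊢ <;> omega

theorem edgeFinset_eq :
    graph.edgeFinset = {s(0, 1), s(0, 2), s(0, 3), s(1, 2), s(1, 3), s(2, 3)} := by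
  decide

theorem edgeClassCard_eq (γ : Sym2 (Fin 4) → ℕ) (i : ℕ) :
    edgeClassCard graph γ i =
      [γ s(0, 1), γ s(0, 2), γ s(0, 3), γ s(1, 2), γ s(1, 3), γ s(2, 3)].count i := by
  rw [edgeClassCard, edgeFinset_eq, card_filter]
  simp only [List.count_cons, List.count_nil, beq_iff_eq]
  rw [sum_insert (by decide), sum_insert (by decide), sum_insert (by decide),
    sum_insert (by decide), sum_insert (by decide), sum_singleton]
  omega

theorem not_injective_vertexSums_of_le_two :
    ∀ a ∈ Icc 1 2, ∀ b ∈ Icc 1 2, ∀ c ∈ Icc 1 2, ∀ d ∈ Icc 1 2, ∀ e ∈ Icc 1 2, ∀ f ∈ Icc 1 2,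
      ¬ Function.Injective (vertexSums a b c d e f) := by
  decide

theorem not_injective_vertexSums_of_count_eq_two :
    ∀ a ∈ Icc 1 3, ∀ b ∈ Icc 1 3, ∀ c ∈ Icc 1 3, ∀ d ∈ Icc 1 3, ∀ e ∈ Icc 1 3, ∀ f ∈ Icc 1 3,
      (∀ i ∈ Icc 1 3, [a, b, c, d, e, f].count i = 2) →
      ¬ Function.Injective (vertexSums a b c d e f) := by
  decide

theorem not_nsdEdge_of_le_two {γ : Sym2 (Fin 4) → ℕ} (hγ : IsEdgeKColoring graph 2 γ) :
    ¬ NsdEdge graph γ := by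
  rw [nsdEdge_completeGraph_iff, vSum_eq]
  exact not_injective_vertexSums_of_le_two _ (hγ.mem_Icc (by decide)) _ (hγ.mem_Icc (by decide))
    _ (hγ.mem_Icc (by decide)) _ (hγ.mem_Icc (by decide)) _ (hγ.mem_Icc (by decide))
    _ (hγ.mem_Icc (by decide))

theorem not_hasEqNsdEdge_three : ¬ HasEqNsdEdge graph 3 := by
  rintro ⟨γ, hγ, hnsd, heq⟩
  have hcount := heq.edgeClassCard_eq hγ (m := 2) (by rw [edgeFinset_eq]; rfl)
  simp only [edgeClassCard_eq] at hcount
  rw [nsdEdge_completeGraph_iff, vSum_eq] at hnsd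
  exact not_injective_vertexSums_of_count_eq_two _ (hγ.mem_Icc (by decide))
    _ (hγ.mem_Icc (by decide)) _ (hγ.mem_Icc (by decide)) _ (hγ.mem_Icc (by decide))
    _ (hγ.mem_Icc (by decide)) _ (hγ.mem_Icc (by decide)) hcount hnsd

theorem not_hasEqNsdEdge_of_le_three {k : ℕ} (hk : k ≤ 3) : ¬ HasEqNsdEdge graph k := by
  rcases Nat.lt_or_ge k 3 with hk2 | hk3
  · rintro ⟨γ, hγ, hnsd, -⟩
    exact not_nsdEdge_of_le_two (fun e he => (hγ e he).imp_right (by omega)) hnsd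
  · exact le_antisymm hk hk3 ▸ not_hasEqNsdEdge_three

def colouring : Sym2 (Fin 4) → ℕ := fun e =>
  if e = s(0, 1) then 1 else if e = s(0, 2) then 2 else if e = s(0, 3) then 3 else
  if e = s(1, 2) then 4 else if e = s(1, 3) then 2 else 4

theorem hasEqNsdEdge_four : HasEqNsdEdge graph 4 := by
  refine ⟨colouring, fun e he => ?_, ?_, ?_⟩
  · rw [← SimpleGraph.mem_edgeFinset, edgeFinset_eq] at he
    revert e
    decide
  · rw [nsdEdge_completeGraph_iff, vSum_eq]
    decide
  · simp only [EquitableEdge, edgeClassCard_eq]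
    decide

end K4

/-- `K_4` admits no equitable neighbour-sum-distinguishing edge `3`-colouring,
but admits an equitable nsd edge `4`-colouring; hence its equitable nsd-index is `4`. -/
theorem completeGraph_four_equitable_nsd_index :
    ¬ HasEqNsdEdge (SimpleGraph.completeGraph (Fin 4)) 3 ∧
    HasEqNsdEdge (SimpleGraph.completeGraph (Fin 4)) 4 ∧
    IsLeast {k : ℕ | HasEqNsdEdge (SimpleGraph.completeGraph (Fin 4)) k} 4 :=
  ⟨K4.not_hasEqNsdEdge_three, K4.hasEqNsdEdge_four, K4.hasEqNsdEdge_four,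
    fun _ hk => not_lt.1 fun hlt => K4.not_hasEqNsdEdge_of_le_three (by omega) hk⟩
end

section
/- Every connected bipartite graph G with bipartition (X, Y) containing at least one edge admits a total 2-colouring γ: V(G)∪E(G) → {1,2} such that every vertex in X has even sum σ^T_γ, every vertex in Y has odd sum σ^T_γ (or vice versa), the number of elements coloured 2 is non-zero, and the number of elements coloured 1 strictly exceeds the number of elements coloured 2. -/
open Finset

variable {V : Type*} [Fintype V] [DecidableEq V]

/-- The total vertex sum at `v` induced by a total colouring `(fv, fe)`. -/
def tSum (G : SimpleGraph V) [DecidableRel G.Adj] (fv : V → ℕ) (fe : Sym2 V → ℕ) (v : V) : ℕ :=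
  fv v + vSum G fe v

/-- `(fv, fe)` is a total `k`-colouring: each vertex and edge gets a colour in `{1, …, k}`. -/
def IsTotalKColoring (G : SimpleGraph V) (k : ℕ) (fv : V → ℕ) (fe : Sym2 V → ℕ) : Prop :=
  (∀ v : V, 1 ≤ fv v ∧ fv v ≤ k) ∧ ∀ e ∈ G.edgeSet, 1 ≤ fe e ∧ fe e ≤ k

/-- `(fv, fe)` is a neighbour-sum-distinguishing total colouring. -/
def NsdTotal (G : SimpleGraph V) [DecidableRel G.Adj] (fv : V → ℕ) (fe : Sym2 V → ℕ) : Prop :=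
  ∀ ⦃u v : V⦄, G.Adj u v → tSum G fv fe u ≠ tSum G fv fe v

/-- The number of elements (vertices and edges) of `G` coloured `i`. -/
def totalClassCard (G : SimpleGraph V) [DecidableRel G.Adj]
    (fv : V → ℕ) (fe : Sym2 V → ℕ) (i : ℕ) : ℕ :=
  (Finset.univ.filter fun v => fv v = i).card + edgeClassCard G fe i

/-- `(fv, fe)` is equitable as a total `k`-colouring. -/
def EquitableTotal (G : SimpleGraph V) [DecidableRel G.Adj] (k : ℕ)
    (fv : V → ℕ) (fe : Sym2 V → ℕ) : Prop :=
  ∀ i ∈ Finset.Icc 1 k, ∀ j ∈ Finset.Icc 1 k,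
    totalClassCard G fv fe i ≤ totalClassCard G fv fe j + 1

/-- `G` admits an equitable neighbour-sum-distinguishing total `k`-colouring. -/
def HasEqNsdTotal (G : SimpleGraph V) [DecidableRel G.Adj] (k : ℕ) : Prop :=
  ∃ (fv : V → ℕ) (fe : Sym2 V → ℕ),
    IsTotalKColoring G k fv fe ∧ NsdTotal G fv fe ∧ EquitableTotal G k fv fe


section helpers
variable (G : SimpleGraph V) [DecidableRel G.Adj]

lemma vSum_const_one (v : V) : vSum G (fun _ => 1) v = G.degree v := by
  rw [vSum]; rw [Finset.sum_const, smul_eq_mul, mul_one]; rfl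

lemma vSum_trick (a b : V) (hab : G.Adj a b) (v : V) :
    vSum G (fun e => if e = s(a, b) then 2 else 1) v
      = G.degree v + (if v = a ∨ v = b then 1 else 0) := by
  classical
  unfold vSum
  have h1 : ∀ u ∈ G.neighborFinset v,
      (if s(v, u) = s(a, b) then (2:ℕ) else 1)
        = 1 + (if s(v, u) = s(a, b) then 1 else 0) := by
    intro u _; split <;> rfl
  rw [Finset.sum_congr rfl h1, Finset.sum_add_distrib, Finset.sum_const, smul_eq_mul, mul_one,
    ← Finset.card_filter]
  have hdeg : (G.neighborFinset v).card = G.degree v := rfl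
  rw [← hdeg]
  congr 1
  by_cases hva : v = a
  · subst hva
    rw [if_pos (Or.inl rfl)]
    have : (G.neighborFinset v).filter (fun u => s(v, u) = s(v, b)) = {b} := by
      ext u
      simp only [Finset.mem_filter, SimpleGraph.mem_neighborFinset, Finset.mem_singleton,
        Sym2.congr_right]
      exact ⟨fun h => h.2, fun h => by subst h; exact ⟨hab, rfl⟩⟩
    rw [this, Finset.card_singleton]
  · by_cases hvb : v = b
    · subst hvb
      rw [if_pos (Or.inr rfl)]
      have : (G.neighborFinset v).filter (fun u => s(v, u) = s(a, v)) = {a} := by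
        ext u
        simp only [Finset.mem_filter, SimpleGraph.mem_neighborFinset, Finset.mem_singleton]
        constructor
        · rintro ⟨_, h⟩
          rw [Sym2.eq_swap (a := a), Sym2.congr_right] at h
          exact h
        · rintro rfl; exact ⟨hab.symm, Sym2.eq_swap⟩
      rw [this, Finset.card_singleton]
    · rw [if_neg (by tauto)]
      have : (G.neighborFinset v).filter (fun u => s(v, u) = s(a, b)) = ∅ := by
        ext u
        simp only [Finset.mem_filter, SimpleGraph.mem_neighborFinset, Finset.notMem_empty,
          iff_false, not_and, Sym2.eq_iff]
        rintro _ (⟨rfl, rfl⟩ | ⟨rfl, rfl⟩) <;> tauto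
      rw [this, Finset.card_empty]

lemma edgeClassCard_one_one : edgeClassCard G (fun _ => 1) 1 = G.edgeFinset.card := by
  unfold edgeClassCard; simp

lemma edgeClassCard_one_two : edgeClassCard G (fun _ => 1) 2 = 0 := by
  unfold edgeClassCard
  rw [Finset.card_eq_zero]
  ext e; simp

lemma edgeClassCard_trick_two (a b : V) (hab : G.Adj a b) :
    edgeClassCard G (fun e => if e = s(a,b) then 2 else 1) 2 = 1 := by
  unfold edgeClassCard
  have h : G.edgeFinset.filter (fun e => (if e = s(a,b) then (2:ℕ) else 1) = 2) = {s(a,b)} := by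
    ext e
    simp only [Finset.mem_filter, Finset.mem_singleton]
    constructor
    · rintro ⟨_, h⟩
      by_contra hne
      rw [if_neg hne] at h
      omega
    · rintro rfl
      exact ⟨SimpleGraph.mem_edgeFinset.mpr hab, by simp⟩
  rw [h, Finset.card_singleton]

lemma edgeClassCard_trick_one (a b : V) (hab : G.Adj a b) :
    edgeClassCard G (fun e => if e = s(a,b) then 2 else 1) 1 = G.edgeFinset.card - 1 := by
  unfold edgeClassCard
  have h : G.edgeFinset.filter (fun e => (if e = s(a,b) then (2:ℕ) else 1) = 1)
      = G.edgeFinset.filter (fun e => ¬ (e = s(a,b))) := by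
    apply Finset.filter_congr
    intro e _
    split_ifs with hh <;> simp [hh]
  rw [h, Finset.filter_not, Finset.card_sdiff_of_subset (Finset.filter_subset _ _)]
  congr 1
  rw [Finset.filter_eq', if_pos (SimpleGraph.mem_edgeFinset.mpr hab), Finset.card_singleton]

lemma filter_ite21 (q : V → Prop) [DecidablePred q] :
    ((univ : Finset V).filter fun v => (if q v then (2:ℕ) else 1) = 2) = univ.filter q ∧
    ((univ : Finset V).filter fun v => (if q v then (2:ℕ) else 1) = 1)
      = univ.filter fun v => ¬ q v := by
  constructor <;> (apply Finset.filter_congr; intro v _; split_ifs with h <;> simp [h])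

lemma filter_ite12 (q : V → Prop) [DecidablePred q] :
    ((univ : Finset V).filter fun v => (if q v then (1:ℕ) else 2) = 2)
      = univ.filter (fun v => ¬ q v) ∧
    ((univ : Finset V).filter fun v => (if q v then (1:ℕ) else 2) = 1) = univ.filter q := by
  constructor <;> (apply Finset.filter_congr; intro v _; split_ifs with h <;> simp [h])

end helpers

/-- Every connected bipartite graph with bipartition `(X, Xᶜ)` and at least one edge
admits a total `2`-colouring in which the vertices of one part all have even sums and
the vertices of the other part all have odd sums, some element is coloured `2`, and
strictly more elements are coloured `1` than `2`. -/
theorem connected_bipartite_majority_one (G : SimpleGraph V) [DecidableRel G.Adj]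
    (X : Set V) (hX : ∀ u v : V, G.Adj u v → (u ∈ X ↔ v ∉ X))
    (hconn : G.Connected) (hedge : G.edgeSet.Nonempty) :
    ∃ (fv : V → ℕ) (fe : Sym2 V → ℕ),
      IsTotalKColoring G 2 fv fe ∧
      (((∀ v ∈ X, Even (tSum G fv fe v)) ∧ (∀ v ∉ X, Odd (tSum G fv fe v))) ∨
        ((∀ v ∈ X, Odd (tSum G fv fe v)) ∧ (∀ v ∉ X, Even (tSum G fv fe v)))) ∧
      totalClassCard G fv fe 2 ≠ 0 ∧
      totalClassCard G fv fe 2 < totalClassCard G fv fe 1 := by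
  classical
  obtain ⟨a, b, hab⟩ : ∃ a b, G.Adj a b := by
    obtain ⟨e, he⟩ := hedge
    revert he
    refine Sym2.ind (fun a b he => ⟨a, b, he⟩) e
  have hne : a ≠ b := hab.ne
  set n := Fintype.card V with hn
  set m := G.edgeFinset.card with hm
  have hm1 : 1 ≤ m := Finset.card_pos.mpr ⟨s(a,b), SimpleGraph.mem_edgeFinset.mpr hab⟩
  have hn2 : 2 ≤ n := Fintype.one_lt_card_iff_nontrivial.mpr ⟨a, b, hne⟩
  have hdeg : ∀ v, 1 ≤ G.degree v := by
    intro v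
    rw [Nat.one_le_iff_ne_zero, ← Nat.pos_iff_ne_zero, G.degree_pos_iff_exists_adj]
    by_cases hva : v = a
    · exact ⟨b, hva ▸ hab⟩
    · obtain ⟨p⟩ := hconn v a
      exact ⟨p.getVert 1, p.adj_snd (SimpleGraph.Walk.not_nil_of_ne hva)⟩
  -- the two vertices {a,b} as a filter
  have habf : ((univ : Finset V).filter fun v => v = a ∨ v = b) = {a, b} := by
    ext v; simp [Finset.mem_insert]
  have habcard : ((univ : Finset V).filter fun v => v = a ∨ v = b).card = 2 := by
    rw [habf, Finset.card_pair hne]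
  have habcompl : ((univ : Finset V).filter fun v => ¬ (v = a ∨ v = b)).card = n - 2 := by
    have := Finset.card_filter_add_card_filter_not
      (s := (univ : Finset V)) (p := fun v => v = a ∨ v = b)
    rw [Finset.card_univ, ← hn, habcard] at this
    omega
  by_cases h1 : ∀ v : V, (v ∈ X ↔ Odd (G.degree v))
  · -- X is the odd-degree side
    by_cases hnm : n ≤ m + 1
    · -- colour one edge 2, its endpoints 1, everything else 2
      refine ⟨fun v => if v = a ∨ v = b then 1 else 2,
        fun e => if e = s(a,b) then 2 else 1, ⟨?_, ?_⟩, ?_, ?_, ?_⟩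
      · intro v; dsimp only; split <;> omega
      · intro e _; dsimp only; split <;> omega
      · have hts : ∀ v, tSum G (fun v => if v = a ∨ v = b then 1 else 2)
            (fun e => if e = s(a,b) then 2 else 1) v = G.degree v + 2 := by
          intro v; unfold tSum; rw [vSum_trick G a b hab v]; dsimp only; split_ifs <;> omega
        right
        constructor
        · intro v hv
          have hd := (h1 v).mp hv
          rw [hts v, Nat.odd_iff] at *
          omega
        · intro v hv
          have hd : ¬ Odd (G.degree v) := fun h => hv ((h1 v).mpr h)
          rw [hts v, Nat.even_iff]
          rw [Nat.odd_iff] at hd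
          omega
      · unfold totalClassCard
        rw [edgeClassCard_trick_two G a b hab, (filter_ite12 (fun v => v = a ∨ v = b)).1,
          habcompl]
        omega
      · unfold totalClassCard
        rw [edgeClassCard_trick_two G a b hab, edgeClassCard_trick_one G a b hab,
          (filter_ite12 (fun v => v = a ∨ v = b)).1, (filter_ite12 (fun v => v = a ∨ v = b)).2,
          habcompl, habcard, ← hm]
        omega
    · -- sparse case is impossible to be too small: n + 1 ≤ 2 m
      have hyw : ∃ y, y ∉ X := by
        by_cases haX : a ∈ X
        · exact ⟨b, (hX a b hab).mp haX⟩
        · exact ⟨a, haX⟩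
      obtain ⟨y, hy⟩ := hyw
      have hdegY : ∀ v, v ∉ X → 2 ≤ G.degree v := by
        intro v hv
        have hd1 := hdeg v
        have hodd : ¬ Odd (G.degree v) := fun h => hv ((h1 v).mpr h)
        rw [Nat.odd_iff] at hodd
        omega
      have hsum : n + 1 ≤ 2 * m := by
        have hb : ∀ v ∈ (univ : Finset V), (if v ∈ X then (1:ℕ) else 2) ≤ G.degree v := by
          intro v _; split_ifs with h
          · exact hdeg v
          · exact hdegY v h
        have hle := Finset.sum_le_sum hb
        rw [SimpleGraph.sum_degrees_eq_twice_card_edges, ← hm] at hle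
        have hsplit : ∑ v : V, (if v ∈ X then (1:ℕ) else 2)
            = ∑ v : V, ((1:ℕ) + if v ∈ X then 0 else 1) := by
          apply Finset.sum_congr rfl; intro v _; split_ifs <;> rfl
        rw [hsplit, Finset.sum_add_distrib, Finset.sum_const, smul_eq_mul, mul_one,
          Finset.card_univ, ← hn] at hle
        have hy1 : (1:ℕ) ≤ ∑ v : V, (if v ∈ X then (0:ℕ) else 1) := by
          have := Finset.single_le_sum (f := fun v => if v ∈ X then (0:ℕ) else 1)
            (fun i _ => by positivity) (Finset.mem_univ y)
          simpa only [if_neg hy] using this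
        omega
      -- colour one edge 2, its endpoints 2, everything else 1
      refine ⟨fun v => if v = a ∨ v = b then 2 else 1,
        fun e => if e = s(a,b) then 2 else 1, ⟨?_, ?_⟩, ?_, ?_, ?_⟩
      · intro v; dsimp only; split <;> omega
      · intro e _; dsimp only; split <;> omega
      · have hts : ∀ v, tSum G (fun v => if v = a ∨ v = b then 2 else 1)
            (fun e => if e = s(a,b) then 2 else 1) v % 2 = (G.degree v + 1) % 2 := by
          intro v; unfold tSum; rw [vSum_trick G a b hab v]; dsimp only; split_ifs <;> omega
        left
        constructor
        · intro v hv
          have hd := (h1 v).mp hv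
          rw [Nat.odd_iff] at hd
          rw [Nat.even_iff, hts v]
          omega
        · intro v hv
          have hd : ¬ Odd (G.degree v) := fun h => hv ((h1 v).mpr h)
          rw [Nat.odd_iff] at hd
          rw [Nat.odd_iff, hts v]
          omega
      · unfold totalClassCard
        rw [edgeClassCard_trick_two G a b hab, (filter_ite21 (fun v => v = a ∨ v = b)).1,
          habcard]
        omega
      · unfold totalClassCard
        rw [edgeClassCard_trick_two G a b hab, edgeClassCard_trick_one G a b hab,
          (filter_ite21 (fun v => v = a ∨ v = b)).1, (filter_ite21 (fun v => v = a ∨ v = b)).2,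
          habcompl, habcard, ← hm]
        omega
  · by_cases h2 : ∀ v : V, (v ∈ X ↔ Even (G.degree v))
    · -- X is the even-degree side
      by_cases hnm : n ≤ m + 1
      · refine ⟨fun v => if v = a ∨ v = b then 1 else 2,
          fun e => if e = s(a,b) then 2 else 1, ⟨?_, ?_⟩, ?_, ?_, ?_⟩
        · intro v; dsimp only; split <;> omega
        · intro e _; dsimp only; split <;> omega
        · have hts : ∀ v, tSum G (fun v => if v = a ∨ v = b then 1 else 2)
              (fun e => if e = s(a,b) then 2 else 1) v = G.degree v + 2 := by
            intro v; unfold tSum; rw [vSum_trick G a b hab v]; dsimp only; split_ifs <;> omega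
          left
          constructor
          · intro v hv
            have hd := (h2 v).mp hv
            rw [hts v, Nat.even_iff] at *
            omega
          · intro v hv
            have hd : ¬ Even (G.degree v) := fun h => hv ((h2 v).mpr h)
            rw [hts v, Nat.odd_iff]
            rw [Nat.even_iff] at hd
            omega
        · unfold totalClassCard
          rw [edgeClassCard_trick_two G a b hab, (filter_ite12 (fun v => v = a ∨ v = b)).1,
            habcompl]
          omega
        · unfold totalClassCard
          rw [edgeClassCard_trick_two G a b hab, edgeClassCard_trick_one G a b hab,
            (filter_ite12 (fun v => v = a ∨ v = b)).1, (filter_ite12 (fun v => v = a ∨ v = b)).2,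
            habcompl, habcard, ← hm]
          omega
      · have hxw : ∃ x, x ∈ X := by
          by_cases haX : a ∈ X
          · exact ⟨a, haX⟩
          · refine ⟨b, ?_⟩
            by_contra hbX
            exact haX ((hX a b hab).mpr hbX)
        obtain ⟨x, hx⟩ := hxw
        have hdegX : ∀ v, v ∈ X → 2 ≤ G.degree v := by
          intro v hv
          have hd1 := hdeg v
          have heven : Even (G.degree v) := (h2 v).mp hv
          rw [Nat.even_iff] at heven
          omega
        have hsum : n + 1 ≤ 2 * m := by
          have hb : ∀ v ∈ (univ : Finset V), (if v ∈ X then (2:ℕ) else 1) ≤ G.degree v := by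
            intro v _; split_ifs with h
            · exact hdegX v h
            · exact hdeg v
          have hle := Finset.sum_le_sum hb
          rw [SimpleGraph.sum_degrees_eq_twice_card_edges, ← hm] at hle
          have hsplit : ∑ v : V, (if v ∈ X then (2:ℕ) else 1)
              = ∑ v : V, ((1:ℕ) + if v ∈ X then 1 else 0) := by
            apply Finset.sum_congr rfl; intro v _; split_ifs <;> rfl
          rw [hsplit, Finset.sum_add_distrib, Finset.sum_const, smul_eq_mul, mul_one,
            Finset.card_univ, ← hn] at hle
          have hx1 : (1:ℕ) ≤ ∑ v : V, (if v ∈ X then (1:ℕ) else 0) := by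
            have := Finset.single_le_sum (f := fun v => if v ∈ X then (1:ℕ) else 0)
              (fun i _ => by positivity) (Finset.mem_univ x)
            simpa only [if_pos hx] using this
          omega
        refine ⟨fun v => if v = a ∨ v = b then 2 else 1,
          fun e => if e = s(a,b) then 2 else 1, ⟨?_, ?_⟩, ?_, ?_, ?_⟩
        · intro v; dsimp only; split <;> omega
        · intro e _; dsimp only; split <;> omega
        · have hts : ∀ v, tSum G (fun v => if v = a ∨ v = b then 2 else 1)
              (fun e => if e = s(a,b) then 2 else 1) v % 2 = (G.degree v + 1) % 2 := by
            intro v; unfold tSum; rw [vSum_trick G a b hab v]; dsimp only; split_ifs <;> omega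
          right
          constructor
          · intro v hv
            have hd := (h2 v).mp hv
            rw [Nat.even_iff] at hd
            rw [Nat.odd_iff, hts v]
            omega
          · intro v hv
            have hd : ¬ Even (G.degree v) := fun h => hv ((h2 v).mpr h)
            rw [Nat.even_iff] at hd
            rw [Nat.even_iff, hts v]
            omega
        · unfold totalClassCard
          rw [edgeClassCard_trick_two G a b hab, (filter_ite21 (fun v => v = a ∨ v = b)).1,
            habcard]
          omega
        · unfold totalClassCard
          rw [edgeClassCard_trick_two G a b hab, edgeClassCard_trick_one G a b hab,
            (filter_ite21 (fun v => v = a ∨ v = b)).1, (filter_ite21 (fun v => v = a ∨ v = b)).2,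
            habcompl, habcard, ← hm]
          omega
    · -- mixed case: all edges coloured 1
      obtain ⟨v₁, hv₁⟩ := not_forall.mp h1
      obtain ⟨v₂, hv₂⟩ := not_forall.mp h2
      set Q : V → Prop := fun v => (v ∈ X ↔ Even (G.degree v)) with hQ
      have hQiff : ∀ v, Q v ↔ (v ∈ X ↔ Even (G.degree v)) := fun v => by rw [hQ]
      have hQv₁ : Q v₁ := by
        refine (hQiff v₁).mpr ?_
        constructor
        · intro hx
          rcases Nat.even_or_odd (G.degree v₁) with h | h
          · exact h
          · exact absurd (iff_of_true hx h) hv₁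
        · intro he
          by_contra hx
          refine hv₁ (iff_of_false hx ?_)
          intro ho
          rw [Nat.even_iff] at he
          rw [Nat.odd_iff] at ho
          omega
      have hnQv₂ : ¬ Q v₂ := fun h => hv₂ ((hQiff v₂).mp h)
      set s := ((univ : Finset V).filter Q).card with hs
      have hs1 : 1 ≤ s :=
        Finset.card_pos.mpr ⟨v₁, Finset.mem_filter.mpr ⟨Finset.mem_univ _, hQv₁⟩⟩
      have hslt : s < n := by
        rw [hs, hn, Finset.card_lt_iff_ne_univ]
        intro h
        have hmem : v₂ ∈ (univ : Finset V).filter Q := by rw [h]; exact Finset.mem_univ v₂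
        exact hnQv₂ (Finset.mem_filter.mp hmem).2
      have hcompl : ((univ : Finset V).filter fun v => ¬ Q v).card = n - s := by
        have := Finset.card_filter_add_card_filter_not
          (s := (univ : Finset V)) (p := Q)
        rw [Finset.card_univ, ← hn, ← hs] at this
        omega
      -- parity facts
      have hdX : ∀ v ∈ X, (Q v → Even (G.degree v)) ∧ (¬ Q v → Odd (G.degree v)) := by
        intro v hv
        constructor
        · intro hq
          exact ((hQiff v).mp hq).mp hv
        · intro hq
          rcases Nat.even_or_odd (G.degree v) with h | h
          · exact absurd ((hQiff v).mpr (iff_of_true hv h)) hq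
          · exact h
      have hdY : ∀ v, v ∉ X → (Q v → Odd (G.degree v)) ∧ (¬ Q v → Even (G.degree v)) := by
        intro v hv
        constructor
        · intro hq
          rcases Nat.even_or_odd (G.degree v) with h | h
          · exact absurd (((hQiff v).mp hq).mpr h) hv
          · exact h
        · intro hq
          rcases Nat.even_or_odd (G.degree v) with h | h
          · exact h
          · refine absurd ((hQiff v).mpr (iff_of_false hv ?_)) hq
            intro hev
            rw [Nat.even_iff] at hev
            rw [Nat.odd_iff] at h
            omega
      by_cases hhalf : 2 * s ≤ n
      · refine ⟨fun v => if Q v then 2 else 1, fun _ => 1, ⟨?_, ?_⟩, ?_, ?_, ?_⟩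
        · intro v; dsimp only; split <;> omega
        · intro e _; simp
        · left
          constructor
          · intro v hv
            unfold tSum
            rw [vSum_const_one]
            dsimp only
            by_cases hpv : Q v
            · have hd := (hdX v hv).1 hpv
              rw [if_pos hpv, Nat.even_iff]
              rw [Nat.even_iff] at hd
              omega
            · have hd := (hdX v hv).2 hpv
              rw [if_neg hpv, Nat.even_iff]
              rw [Nat.odd_iff] at hd
              omega
          · intro v hv
            unfold tSum
            rw [vSum_const_one]
            dsimp only
            by_cases hpv : Q v
            · have hd := (hdY v hv).1 hpv
              rw [if_pos hpv, Nat.odd_iff]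
              rw [Nat.odd_iff] at hd
              omega
            · have hd := (hdY v hv).2 hpv
              rw [if_neg hpv, Nat.odd_iff]
              rw [Nat.even_iff] at hd
              omega
        · unfold totalClassCard
          rw [edgeClassCard_one_two, (filter_ite21 Q).1, ← hs]
          omega
        · unfold totalClassCard
          rw [edgeClassCard_one_two, edgeClassCard_one_one, (filter_ite21 Q).1,
            (filter_ite21 Q).2, ← hs, hcompl, ← hm]
          omega
      · refine ⟨fun v => if Q v then 1 else 2, fun _ => 1, ⟨?_, ?_⟩, ?_, ?_, ?_⟩
        · intro v; dsimp only; split <;> omega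
        · intro e _; simp
        · right
          constructor
          · intro v hv
            unfold tSum
            rw [vSum_const_one]
            dsimp only
            by_cases hpv : Q v
            · have hd := (hdX v hv).1 hpv
              rw [if_pos hpv, Nat.odd_iff]
              rw [Nat.even_iff] at hd
              omega
            · have hd := (hdX v hv).2 hpv
              rw [if_neg hpv, Nat.odd_iff]
              rw [Nat.odd_iff] at hd
              omega
          · intro v hv
            unfold tSum
            rw [vSum_const_one]
            dsimp only
            by_cases hpv : Q v
            · have hd := (hdY v hv).1 hpv
              rw [if_pos hpv, Nat.even_iff]
              rw [Nat.odd_iff] at hd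
              omega
            · have hd := (hdY v hv).2 hpv
              rw [if_neg hpv, Nat.even_iff]
              rw [Nat.even_iff] at hd
              omega
        · unfold totalClassCard
          rw [edgeClassCard_one_two, (filter_ite12 Q).1, hcompl]
          omega
        · unfold totalClassCard
          rw [edgeClassCard_one_two, edgeClassCard_one_one, (filter_ite12 Q).1,
            (filter_ite12 Q).2, ← hs, hcompl, ← hm]
          omega
end

section
/- Let G be a connected bipartite graph that is not a star, and let γ be a total 2-colouring of G with colours 1 and 2 such that the vertices in one part of the bipartition all have even sums σ^T_γ and the vertices in the other part all have odd sums, the number of elements coloured 2 is non-zero, and the number of elements coloured 1 strictly exceeds the number coloured 2. Then there exists a total 2-colouring γ' of G with the same parity property (vertices in one part have even sums, in the other part odd sums) that uses exactly one more 2 (and hence one fewer 1) than γ. -/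
open Finset

variable {V : Type*} [Fintype V] [DecidableEq V]

/-!
Exchanging the colours `1 ↔ 2` on a set `S` of vertices and a set `F` of edges changes the
parity of the sum at `v` by `[v ∈ S] + #{e ∈ F | v ∈ e}`. For a trail together with its two
end vertices this is even everywhere, so every parity survives, and the exchange trades one
`1` for a `2` exactly when the recoloured elements carry one more `1` than `2`.

Suppose no trail of length `1`, `3` or `5` does this. Then an edge between differently coloured
vertices is coloured `2`, a `1`-edge joins equally coloured vertices, and the alternating
parities fix the parity of the number of `1`-edges at each vertex (its `1`-degree). A case
analysis of short paths shows that the vertices coloured `1` are independent (otherwise `G`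
would be a star) and that every `1`-edge has an end coloured `2` of `1`-degree one. So the
`1`-edges inject into the `2`-vertices and the `1`-vertices into the `2`-edges: there are no
more `1`s than `2`s.
-/

open SimpleGraph

lemma SimpleGraph.Connected.mem_of_forall_adj_adj_eq {W : Type*} {G : SimpleGraph W}
    (hG : G.Connected) {b : W} (h : ∀ x, G.Adj b x → ∀ y, G.Adj x y → y = b) :
    ∀ e ∈ G.edgeSet, b ∈ e := by
  have hball (v : W) : v = b ∨ G.Adj b v := by
    by_contra hv
    obtain ⟨d, -, hd, hd'⟩ :=
      (hG.preconnected b v).some.exists_boundary_dart {x | x = b ∨ G.Adj b x} (.inl rfl) hv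
    rcases hd with hd | hd
    · exact hd' (.inr (hd ▸ d.adj))
    · exact hd' (.inl (h _ hd _ d.adj))
  intro e he
  induction e using Sym2.ind with
  | _ x y =>
    rcases hball x with rfl | hbx
    · exact Sym2.mem_mk_left _ _
    · exact h x hbx y he ▸ Sym2.mem_mk_right _ _

section Swap

variable {α : Type*} {s : Finset α} {f : α → ℕ}

lemma card_filter_one_add_card_filter_two (hf : ∀ a ∈ s, 1 ≤ f a ∧ f a ≤ 2) :
    #{a ∈ s | f a = 1} + #{a ∈ s | f a = 2} = #s := by
  rw [card_filter, card_filter, ← sum_add_distrib, card_eq_sum_ones]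
  exact sum_congr rfl fun a ha => by have := hf a ha; split_ifs <;> omega

lemma card_filter_one_add_two_mul_card_filter_two (hf : ∀ a ∈ s, 1 ≤ f a ∧ f a ≤ 2) :
    #{a ∈ s | f a = 1} + 2 * #{a ∈ s | f a = 2} = ∑ a ∈ s, f a := by
  rw [card_filter, card_filter, mul_sum, ← sum_add_distrib]
  exact sum_congr rfl fun a ha => by have := hf a ha; split_ifs <;> omega

variable [DecidableEq α] {t : Finset α}

def swapOn (s : Finset α) (f : α → ℕ) (a : α) : ℕ :=
  if a ∈ s then 3 - f a else f a

lemma swapOn_bounds {a : α} (h : 1 ≤ f a ∧ f a ≤ 2) : 1 ≤ swapOn s f a ∧ swapOn s f a ≤ 2 := by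
  unfold swapOn; split_ifs <;> omega

lemma natCast_swapOn {a : α} (h : 1 ≤ f a ∧ f a ≤ 2) :
    (swapOn s f a : ZMod 2) = f a + if a ∈ s then 1 else 0 := by
  obtain h | h : f a = 1 ∨ f a = 2 := by omega
  all_goals
    simp only [swapOn, h]
    split_ifs <;> decide

lemma card_filter_swapOn (hst : s ⊆ t) (hf : ∀ a ∈ t, 1 ≤ f a ∧ f a ≤ 2) {i j : ℕ}
    (hij : i + j = 3) :
    #{a ∈ t | swapOn s f a = i} + #{a ∈ s | f a = i} =
      #{a ∈ t | f a = i} + #{a ∈ s | f a = j} := by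
  have split (p : α → Prop) [DecidablePred p] :
      #{a ∈ t | p a} = #{a ∈ t \ s | p a} + #{a ∈ s | p a} := by
    simp only [card_filter, sum_sdiff hst]
  have hs : {a ∈ s | swapOn s f a = i} = {a ∈ s | f a = j} :=
    filter_congr fun a ha => by have := hf a (hst ha); simp only [swapOn, if_pos ha]; omega
  have hts : {a ∈ t \ s | swapOn s f a = i} = {a ∈ t \ s | f a = i} :=
    filter_congr fun a ha => by simp [swapOn, (mem_sdiff.1 ha).2]
  rw [split, split (f · = i), hs, hts]
  omega

end Swap

section Exchange

variable {G : SimpleGraph V} [DecidableRel G.Adj] {fv : V → ℕ} {fe : Sym2 V → ℕ}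

def HasOneForTwoExchange (G : SimpleGraph V) [DecidableRel G.Adj] (fv : V → ℕ)
    (fe : Sym2 V → ℕ) : Prop :=
  ∃ (fv' : V → ℕ) (fe' : Sym2 V → ℕ), IsTotalKColoring G 2 fv' fe' ∧
    (∀ v, tSum G fv' fe' v % 2 = tSum G fv fe v % 2) ∧
    totalClassCard G fv' fe' 2 = totalClassCard G fv fe 2 + 1 ∧
    totalClassCard G fv' fe' 1 + 1 = totalClassCard G fv fe 1

lemma card_filter_neighborFinset_mem {F : Finset (Sym2 V)} (hF : F ⊆ G.edgeFinset) (v : V) :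
    #{u ∈ G.neighborFinset v | s(v, u) ∈ F} = #{e ∈ F | v ∈ e} := by
  refine card_bij (fun u _ => s(v, u)) (fun u hu => ?_) (fun _ _ _ _ h => Sym2.congr_right.mp h)
    fun e he => ?_
  · simp only [mem_filter] at hu ⊢
    exact ⟨hu.2, Sym2.mem_mk_left v u⟩
  · simp only [mem_filter] at he
    obtain ⟨u, rfl⟩ := Sym2.mem_iff_exists.mp he.2
    exact ⟨u, by simpa [he.1] using hF he.1, rfl⟩

lemma tSum_swapOn_mod_two (hcol : IsTotalKColoring G 2 fv fe) {S : Finset V}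
    {F : Finset (Sym2 V)} (hF : F ⊆ G.edgeFinset) {v : V}
    (hv : Even ((if v ∈ S then 1 else 0) + #{e ∈ F | v ∈ e})) :
    tSum G (swapOn S fv) (swapOn F fe) v % 2 = tSum G fv fe v % 2 := by
  rw [← card_filter_neighborFinset_mem hF, ← ZMod.natCast_eq_zero_iff_even] at hv
  rw [← ZMod.natCast_eq_natCast_iff']
  have hedge (u) (hu : u ∈ G.neighborFinset v) :
      (swapOn F fe s(v, u) : ZMod 2) = fe s(v, u) + if s(v, u) ∈ F then 1 else 0 :=
    natCast_swapOn (hcol.2 _ (by simpa using hu))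
  simp only [tSum, vSum, Nat.cast_add, Nat.cast_sum, natCast_swapOn (hcol.1 v),
    sum_congr rfl hedge, sum_add_distrib, sum_boole]
  push_cast at hv
  linear_combination hv

lemma hasOneForTwoExchange_of_swapOn (hcol : IsTotalKColoring G 2 fv fe) (S : Finset V)
    {F : Finset (Sym2 V)} (hF : F ⊆ G.edgeFinset)
    (hcover : ∀ v, Even ((if v ∈ S then 1 else 0) + #{e ∈ F | v ∈ e}))
    (hbal : #{v ∈ S | fv v = 2} + #{e ∈ F | fe e = 2} + 1 =
      #{v ∈ S | fv v = 1} + #{e ∈ F | fe e = 1}) :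
    HasOneForTwoExchange G fv fe := by
  refine ⟨swapOn S fv, swapOn F fe,
    ⟨fun v => swapOn_bounds (hcol.1 v), fun e he => swapOn_bounds (hcol.2 e he)⟩,
    fun v => tSum_swapOn_mod_two hcol hF (hcover v), ?_⟩
  have hV {i j : ℕ} := card_filter_swapOn (i := i) (j := j) (subset_univ S) fun v _ => hcol.1 v
  have hE {i j : ℕ} := card_filter_swapOn (i := i) (j := j) hF fun e he =>
    hcol.2 e (by simpa using he)
  have hV₁ := hV (i := 1) (j := 2) rfl
  have hV₂ := hV (i := 2) (j := 1) rfl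
  have hE₁ := hE (i := 1) (j := 2) rfl
  have hE₂ := hE (i := 2) (j := 1) rfl
  simp only [totalClassCard, edgeClassCard]
  omega

lemma hasOneForTwoExchange_of_isTrail (hcol : IsTotalKColoring G 2 fv fe) {u v : V}
    (p : G.Walk u v) (hp : p.IsTrail) (huv : u ≠ v)
    (hsum : 2 * (fv u + fv v + (p.edges.map fe).sum) = 3 * p.length + 5) :
    HasOneForTwoExchange G fv fe := by
  -- `n = p.length + 2` elements are recoloured; `hsum` says their colours add up to
  -- `(3n - 1) / 2`, i.e. there is one more `1` than `2` among them
  set F := p.edges.toFinset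
  have hF : F ⊆ G.edgeFinset := fun e he => by
    simpa using p.edges_subset_edgeSet (List.mem_toFinset.1 he)
  refine hasOneForTwoExchange_of_swapOn hcol {u, v} hF (fun x => ?_) ?_
  · have hcount : #{e ∈ F | x ∈ e} = p.edges.countP (x ∈ ·) := by
      rw [List.countP_eq_length_filter, ← List.toFinset_card_of_nodup (hp.edges_nodup.filter _),
        List.toFinset_filter]
      simp [F]
    have hpar := hp.even_countP_edges_iff x
    by_cases hx : x = u ∨ x = v
    · simp only [mem_insert, mem_singleton, hx, if_true, hcount]
      rw [add_comm, Nat.even_add_one, hpar]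
      tauto
    · simp only [mem_insert, mem_singleton, hx, if_false, hcount, zero_add, hpar]
      tauto
  · have hFcol : ∀ e ∈ F, 1 ≤ fe e ∧ fe e ≤ 2 := fun e he => hcol.2 e (by simpa using hF he)
    have hS₁ := card_filter_one_add_card_filter_two (s := {u, v}) fun x _ => hcol.1 x
    have hS₂ := card_filter_one_add_two_mul_card_filter_two (s := {u, v}) fun x _ => hcol.1 x
    have hF₁ := card_filter_one_add_card_filter_two hFcol
    have hF₂ := card_filter_one_add_two_mul_card_filter_two hFcol
    rw [card_pair huv] at hS₁
    rw [sum_pair huv] at hS₂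
    rw [List.toFinset_card_of_nodup hp.edges_nodup, p.length_edges] at hF₁
    rw [List.sum_toFinset fe hp.edges_nodup] at hF₂
    omega

lemma hasOneForTwoExchange_of_path₁ (hcol : IsTotalKColoring G 2 fv fe) {v₀ v₁ : V}
    (h₀₁ : G.Adj v₀ v₁) (hsum : fv v₀ + fv v₁ + fe s(v₀, v₁) = 4) :
    HasOneForTwoExchange G fv fe :=
  hasOneForTwoExchange_of_isTrail hcol (.cons h₀₁ .nil) (by simp) h₀₁.ne
    (by simp; omega)

lemma hasOneForTwoExchange_of_path₃ (hcol : IsTotalKColoring G 2 fv fe) {v₀ v₁ v₂ v₃ : V}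
    (h₀₁ : G.Adj v₀ v₁) (h₁₂ : G.Adj v₁ v₂) (h₂₃ : G.Adj v₂ v₃)
    (h₀₂ : v₀ ≠ v₂) (h₀₃ : v₀ ≠ v₃) (h₁₃ : v₁ ≠ v₃)
    (hsum : fv v₀ + fv v₃ + fe s(v₀, v₁) + fe s(v₁, v₂) + fe s(v₂, v₃) = 7) :
    HasOneForTwoExchange G fv fe :=
  hasOneForTwoExchange_of_isTrail hcol (.cons h₀₁ (.cons h₁₂ (.cons h₂₃ .nil)))
    (Walk.IsPath.isTrail (by simp [h₀₁.ne, h₁₂.ne, h₂₃.ne, h₀₂, h₀₃, h₁₃])) h₀₃ (by simp; omega)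

lemma hasOneForTwoExchange_of_path₅ (hcol : IsTotalKColoring G 2 fv fe)
    {v₀ v₁ v₂ v₃ v₄ v₅ : V} (h₀₁ : G.Adj v₀ v₁) (h₁₂ : G.Adj v₁ v₂) (h₂₃ : G.Adj v₂ v₃)
    (h₃₄ : G.Adj v₃ v₄) (h₄₅ : G.Adj v₄ v₅)
    (h₀₂ : v₀ ≠ v₂) (h₀₃ : v₀ ≠ v₃) (h₀₄ : v₀ ≠ v₄) (h₀₅ : v₀ ≠ v₅) (h₁₃ : v₁ ≠ v₃)
    (h₁₄ : v₁ ≠ v₄) (h₁₅ : v₁ ≠ v₅) (h₂₄ : v₂ ≠ v₄) (h₂₅ : v₂ ≠ v₅) (h₃₅ : v₃ ≠ v₅)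
    (hsum : fv v₀ + fv v₅ + fe s(v₀, v₁) + fe s(v₁, v₂) + fe s(v₂, v₃) + fe s(v₃, v₄) +
      fe s(v₄, v₅) = 10) :
    HasOneForTwoExchange G fv fe :=
  hasOneForTwoExchange_of_isTrail hcol
    (.cons h₀₁ (.cons h₁₂ (.cons h₂₃ (.cons h₃₄ (.cons h₄₅ .nil)))))
    (Walk.IsPath.isTrail (by simp [h₀₁.ne, h₁₂.ne, h₂₃.ne, h₃₄.ne, h₄₅.ne, h₀₂, h₀₃, h₀₄, h₀₅,
      h₁₃, h₁₄, h₁₅, h₂₄, h₂₅, h₃₅])) h₀₅ (by simp; omega)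

end Exchange

structure IsExchangeFree (G : SimpleGraph V) [DecidableRel G.Adj] (fv : V → ℕ)
    (fe : Sym2 V → ℕ) : Prop where
  isTotalKColoring : IsTotalKColoring G 2 fv fe
  not_hasOneForTwoExchange : ¬ HasOneForTwoExchange G fv fe
  tSum_add_tSum_mod_two : ∀ ⦃u v⦄, G.Adj u v → (tSum G fv fe u + tSum G fv fe v) % 2 = 1

def oneDegree (G : SimpleGraph V) [DecidableRel G.Adj] (fe : Sym2 V → ℕ) (v : V) : ℕ :=
  #{u ∈ G.neighborFinset v | fe s(v, u) = 1}

section OneDegree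

variable {G : SimpleGraph V} [DecidableRel G.Adj] {fe : Sym2 V → ℕ} {u v w : V}

lemma one_le_oneDegree (h : G.Adj v u) (he : fe s(v, u) = 1) : 1 ≤ oneDegree G fe v :=
  card_pos.2 ⟨u, by simp [h, he]⟩

lemma exists_of_one_le_oneDegree (h : 1 ≤ oneDegree G fe v) :
    ∃ u, G.Adj v u ∧ fe s(v, u) = 1 := by
  obtain ⟨u, hu⟩ := card_pos.1 h
  exact ⟨u, by simpa using hu⟩

lemma exists_ne_of_two_le_oneDegree (h : 2 ≤ oneDegree G fe v) (a : V) :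
    ∃ u, G.Adj v u ∧ fe s(v, u) = 1 ∧ u ≠ a := by
  obtain ⟨u, hu, hua⟩ := exists_mem_ne h a
  rw [mem_filter, mem_neighborFinset] at hu
  exact ⟨u, hu.1, hu.2, hua⟩

lemma eq_of_oneDegree_eq_one (h : oneDegree G fe v = 1) (hu : G.Adj v u) (heu : fe s(v, u) = 1)
    (hw : G.Adj v w) (hew : fe s(v, w) = 1) : u = w :=
  card_le_one.1 h.le u (by simp [hu, heu]) w (by simp [hw, hew])

lemma tSum_mod_two {fv : V → ℕ} (hcol : IsTotalKColoring G 2 fv fe) (v : V) :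
    tSum G fv fe v % 2 = (fv v + oneDegree G fe v) % 2 := by
  have hvSum : vSum G fe v % 2 = oneDegree G fe v % 2 := by
    rw [vSum, sum_nat_mod, oneDegree, card_filter]
    congr 1
    refine sum_congr rfl fun u hu => ?_
    have := hcol.2 s(v, u) (by simpa using hu)
    split_ifs <;> omega
  rw [tSum, Nat.add_mod, hvSum, ← Nat.add_mod]

end OneDegree

namespace IsExchangeFree

variable {G : SimpleGraph V} [DecidableRel G.Adj] {fv : V → ℕ} {fe : Sym2 V → ℕ}
  {b s u v w x y : V}

lemma fv_eq_one_or_two (h : IsExchangeFree G fv fe) (v : V) : fv v = 1 ∨ fv v = 2 := by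
  have := h.isTotalKColoring.1 v
  omega

lemma fe_eq_one_or_two (h : IsExchangeFree G fv fe) (huv : G.Adj u v) :
    fe s(u, v) = 1 ∨ fe s(u, v) = 2 := by
  have := h.isTotalKColoring.2 s(u, v) huv
  omega

lemma not_adj_of_adj_of_adj (h : IsExchangeFree G fv fe) (huv : G.Adj u v) (hvw : G.Adj v w) :
    ¬ G.Adj w u := fun hwu => by
  have := h.tSum_add_tSum_mod_two huv
  have := h.tSum_add_tSum_mod_two hvw
  have := h.tSum_add_tSum_mod_two hwu
  omega

lemma fe_eq_two_of_fv_ne (h : IsExchangeFree G fv fe) (huv : G.Adj u v) (hne : fv u ≠ fv v) :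
    fe s(u, v) = 2 := by
  have := h.fv_eq_one_or_two u
  have := h.fv_eq_one_or_two v
  refine (h.fe_eq_one_or_two huv).resolve_left fun he => h.not_hasOneForTwoExchange ?_
  exact hasOneForTwoExchange_of_path₁ h.isTotalKColoring huv (by omega)

lemma fe_eq_one_of_fv_eq_one (h : IsExchangeFree G fv fe) (huv : G.Adj u v) (hu : fv u = 1)
    (hv : fv v = 1) : fe s(u, v) = 1 :=
  (h.fe_eq_one_or_two huv).resolve_right fun he =>
    h.not_hasOneForTwoExchange (hasOneForTwoExchange_of_path₁ h.isTotalKColoring huv (by omega))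

lemma fv_eq_fv_of_fe_eq_one (h : IsExchangeFree G fv fe) (huv : G.Adj u v)
    (he : fe s(u, v) = 1) : fv u = fv v := by
  by_contra hne
  have := h.fe_eq_two_of_fv_ne huv hne
  omega

lemma oneDegree_add_mod_two (h : IsExchangeFree G fv fe) (huv : G.Adj u v) :
    (fv u + oneDegree G fe u + (fv v + oneDegree G fe v)) % 2 = 1 := by
  have := h.tSum_add_tSum_mod_two huv
  rw [Nat.add_mod, tSum_mod_two h.isTotalKColoring, tSum_mod_two h.isTotalKColoring,
    ← Nat.add_mod] at this
  exact this

lemma exists_fv_eq_two (h : IsExchangeFree G fv fe) (h2 : totalClassCard G fv fe 2 ≠ 0) :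
    ∃ r, fv r = 2 := by
  by_contra! hr
  have hv (v : V) : fv v = 1 := (h.fv_eq_one_or_two v).resolve_right (hr v)
  refine h2 ?_
  simp only [totalClassCard, edgeClassCard, add_eq_zero, card_eq_zero, filter_eq_empty_iff]
  refine ⟨fun v _ => hr v, fun e he => ?_⟩
  induction e using Sym2.ind with
  | _ u v => simp [h.fe_eq_one_of_fv_eq_one (by simpa using he) (hv u) (hv v)]

lemma exists_adj_adj_of_oneDegree_odd (h : IsExchangeFree G fv fe) (hu : fv u = 2)
    (hodd : oneDegree G fe u % 2 = 1) :
    ∃ z l, G.Adj u z ∧ fe s(u, z) = 1 ∧ G.Adj z l ∧ fe s(z, l) = 1 ∧ l ≠ u ∧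
      fv z = 2 ∧ fv l = 2 := by
  obtain ⟨z, huz, hez⟩ := exists_of_one_le_oneDegree (by omega : 1 ≤ oneDegree G fe u)
  have hz : fv z = 2 := h.fv_eq_fv_of_fe_eq_one huz hez ▸ hu
  -- `z` has even `1`-degree by parity, and at least one `1`-edge, towards `u`
  have hpar := h.oneDegree_add_mod_two huz
  have hz₁ := one_le_oneDegree huz.symm (Sym2.eq_swap ▸ hez)
  obtain ⟨l, hzl, hel, hlu⟩ := exists_ne_of_two_le_oneDegree (by omega : 2 ≤ oneDegree G fe z) u
  exact ⟨z, l, huz, hez, hzl, hel, hlu, hz, h.fv_eq_fv_of_fe_eq_one hzl hel ▸ hz⟩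

lemma oneDegree_mod_two_eq_zero_of_adj (h : IsExchangeFree G fv fe) (huw : G.Adj u w)
    (hu : fv u = 2) (hw : fv w = 1) : oneDegree G fe u % 2 = 0 := by
  by_contra hodd
  obtain ⟨z, l, huz, hez, hzl, hel, hlu, hz, hl⟩ := h.exists_adj_adj_of_oneDegree_odd hu (by omega)
  have hwu := h.fe_eq_two_of_fv_ne huw.symm (by omega)
  exact h.not_hasOneForTwoExchange <| hasOneForTwoExchange_of_path₃ h.isTotalKColoring
    huw.symm huz hzl (ne_of_apply_ne fv (by omega)) (ne_of_apply_ne fv (by omega)) hlu.symm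
    (by omega)

lemma eq_of_adj_of_fv_eq_one (h : IsExchangeFree G fv fe) (hb : fv b = 1) (hbs : G.Adj b s)
    (hs : fv s = 2) (hD : 2 ≤ oneDegree G fe b) (hby : G.Adj b y) (hy : fv y = 1)
    (hyx : G.Adj y x) : x = b := by
  by_contra hxb
  have hcol := h.isTotalKColoring
  rcases h.fv_eq_one_or_two x with hx | hx
  · have hsb := h.fe_eq_two_of_fv_ne hbs.symm (by omega)
    have hby₁ := h.fe_eq_one_of_fv_eq_one hby hb hy
    have hyx₁ := h.fe_eq_one_of_fv_eq_one hyx hy hx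
    exact h.not_hasOneForTwoExchange <| hasOneForTwoExchange_of_path₃ hcol hbs.symm hby hyx
      (ne_of_apply_ne fv (by omega)) (ne_of_apply_ne fv (by omega)) (Ne.symm hxb) (by omega)
  · obtain ⟨y', hby', hey', hy'y⟩ := exists_ne_of_two_le_oneDegree hD y
    have hy' : fv y' = 1 := (h.fv_eq_fv_of_fe_eq_one hby' hey').symm.trans hb
    have hxy := h.fe_eq_two_of_fv_ne hyx.symm (by omega)
    have hyb := h.fe_eq_one_of_fv_eq_one hby.symm hy hb
    exact h.not_hasOneForTwoExchange <| hasOneForTwoExchange_of_path₃ hcol hyx.symm hby.symm hby'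
      hxb (ne_of_apply_ne fv (by omega)) (Ne.symm hy'y) (by omega)

lemma eq_of_adj_of_fv_eq_two (h : IsExchangeFree G fv fe) (hb : fv b = 1)
    (hD : 2 ≤ oneDegree G fe b) (hbs : G.Adj b s) (hs : fv s = 2) (hsx : G.Adj s x) :
    x = b := by
  by_contra hxb
  have hcol := h.isTotalKColoring
  obtain ⟨y, hby, hey, hyx⟩ := exists_ne_of_two_le_oneDegree hD x
  have hy : fv y = 1 := (h.fv_eq_fv_of_fe_eq_one hby hey).symm.trans hb
  have hyb := h.fe_eq_one_of_fv_eq_one hby.symm hy hb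
  have hbs₂ := h.fe_eq_two_of_fv_ne hbs (by omega)
  have hys : y ≠ s := ne_of_apply_ne fv (by omega)
  rcases h.fv_eq_one_or_two x with hx | hx
  · have hsx₂ := h.fe_eq_two_of_fv_ne hsx (by omega)
    exact h.not_hasOneForTwoExchange <| hasOneForTwoExchange_of_path₃ hcol hby.symm hbs hsx
      hys hyx (Ne.symm hxb) (by omega)
  rcases h.fe_eq_one_or_two hsx with hsx₁ | hsx₂
  · exact h.not_hasOneForTwoExchange <| hasOneForTwoExchange_of_path₃ hcol hby.symm hbs hsx
      hys hyx (Ne.symm hxb) (by omega)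
  -- `s` has even `1`-degree, so `x` has odd `1`-degree and starts a path of two `1`-edges
  have hDs := h.oneDegree_mod_two_eq_zero_of_adj hbs.symm hs hb
  have hpar := h.oneDegree_add_mod_two hsx
  obtain ⟨z, l, hxz, hxz₁, hzl, hzl₁, hlx, hz, hl⟩ :=
    h.exists_adj_adj_of_oneDegree_odd hx (by omega)
  have hsz : s ≠ z := by
    rintro rfl
    rw [Sym2.eq_swap] at hxz₁
    omega
  have hsl : s ≠ l := by
    rintro rfl
    exact h.not_adj_of_adj_of_adj hsx hxz hzl
  exact h.not_hasOneForTwoExchange <| hasOneForTwoExchange_of_path₅ hcol hby.symm hbs hsx hxz hzl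
    hys hyx (ne_of_apply_ne fv (by omega)) (ne_of_apply_ne fv (by omega)) (Ne.symm hxb)
    (ne_of_apply_ne fv (by omega)) (ne_of_apply_ne fv (by omega)) hsz hsl hlx.symm (by omega)

lemma fv_eq_two_of_adj_of_fv_eq_one (h : IsExchangeFree G fv fe) (hconn : G.Connected)
    (hnotstar : ¬ ∃ c : V, ∀ e ∈ G.edgeSet, c ∈ e) (htwo : ∃ r, fv r = 2) (hwy : G.Adj w y)
    (hw : fv w = 1) : fv y = 2 := by
  refine (h.fv_eq_one_or_two y).resolve_left fun hy => ?_
  obtain ⟨r, hr⟩ := htwo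
  -- on a walk from `w` to a `2`-vertex, some `1`-vertex with a `1`-neighbour is followed by a
  -- `2`-vertex; such a vertex is the centre of a star
  obtain ⟨d, -, ⟨hb, c, hbc, hc⟩, hsS⟩ :=
    (hconn.preconnected w r).some.exists_boundary_dart {x | fv x = 1 ∧ ∃ y, G.Adj x y ∧ fv y = 1}
      ⟨hw, y, hwy, hy⟩ (by simp [hr])
  have hs : fv d.snd = 2 :=
    (h.fv_eq_one_or_two _).resolve_left fun hs => hsS ⟨hs, _, d.adj.symm, hb⟩
  have hDs := h.oneDegree_mod_two_eq_zero_of_adj d.adj.symm hs hb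
  have hpar := h.oneDegree_add_mod_two d.adj
  have hDb := one_le_oneDegree hbc (h.fe_eq_one_of_fv_eq_one hbc hb hc)
  refine hnotstar ⟨d.fst, hconn.mem_of_forall_adj_adj_eq fun x hbx z hxz => ?_⟩
  rcases h.fv_eq_one_or_two x with hx | hx
  · exact h.eq_of_adj_of_fv_eq_one hb d.adj hs (by omega) hbx hx hxz
  · exact h.eq_of_adj_of_fv_eq_two hb (by omega) hbx hx hxz

lemma oneDegree_eq_one_of_fe_eq_one (h : IsExchangeFree G fv fe)
    (hind : ∀ ⦃u v⦄, G.Adj u v → fv u = 1 → fv v = 2) (huv : G.Adj u v) (he : fe s(u, v) = 1) :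
    fv u = 2 ∧ fv v = 2 ∧ (oneDegree G fe u = 1 ∨ oneDegree G fe v = 1) := by
  have hfv := h.fv_eq_fv_of_fe_eq_one huv he
  have hu : fv u = 2 := (h.fv_eq_one_or_two u).resolve_left fun hu => by
    have := hind huv hu
    omega
  refine ⟨hu, hfv ▸ hu, ?_⟩
  by_contra! hD
  have hu₁ := one_le_oneDegree huv he
  have hv₁ := one_le_oneDegree huv.symm (Sym2.eq_swap ▸ he)
  obtain ⟨u', huu', hu', hu'v⟩ := exists_ne_of_two_le_oneDegree (by omega : 2 ≤ oneDegree G fe u) v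
  obtain ⟨v', hvv', hv', hv'u⟩ := exists_ne_of_two_le_oneDegree (by omega : 2 ≤ oneDegree G fe v) u
  have hu'₂ := h.fv_eq_fv_of_fe_eq_one huu' hu'
  have hv'₂ := h.fv_eq_fv_of_fe_eq_one hvv' hv'
  have hu'v' : u' ≠ v' := by
    rintro rfl
    exact h.not_adj_of_adj_of_adj huu'.symm huv hvv'
  rw [Sym2.eq_swap] at hu'
  exact h.not_hasOneForTwoExchange <| hasOneForTwoExchange_of_path₃ h.isTotalKColoring
    huu'.symm huv hvv' hu'v hu'v' hv'u.symm (by omega)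

lemma card_filter_fe_eq_one_le (h : IsExchangeFree G fv fe)
    (hind : ∀ ⦃u v⦄, G.Adj u v → fv u = 1 → fv v = 2) :
    #{e ∈ G.edgeFinset | fe e = 1} ≤ #{v | fv v = 2} := by
  refine card_le_card_of_forall_subsingleton (fun e x => x ∈ e ∧ oneDegree G fe x = 1)
    (fun e he => ?_) fun x _ e he e' he' => ?_
  · simp only [mem_filter, mem_edgeFinset] at he
    induction e using Sym2.ind with
    | _ u v =>
      obtain ⟨hu, hv, hD | hD⟩ := h.oneDegree_eq_one_of_fe_eq_one hind he.1 he.2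
      · exact ⟨u, by simp [hu], Sym2.mem_mk_left u v, hD⟩
      · exact ⟨v, by simp [hv], Sym2.mem_mk_right u v, hD⟩
  · simp only [Set.mem_ofPred_eq, mem_filter, mem_edgeFinset] at he he'
    obtain ⟨⟨hxa, hxa₁⟩, hxe, hD⟩ := he
    obtain ⟨⟨hxa', hxa'₁⟩, hxe', -⟩ := he'
    obtain ⟨a, rfl⟩ := Sym2.mem_iff_exists.1 hxe
    obtain ⟨a', rfl⟩ := Sym2.mem_iff_exists.1 hxe'
    rw [eq_of_oneDegree_eq_one hD (G.mem_edgeSet.1 hxa) hxa₁ (G.mem_edgeSet.1 hxa') hxa'₁]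

lemma card_filter_fv_eq_one_le (h : IsExchangeFree G fv fe)
    (hind : ∀ ⦃u v⦄, G.Adj u v → fv u = 1 → fv v = 2) (hnb : ∀ v, ∃ u, G.Adj v u) :
    #{v | fv v = 1} ≤ #{e ∈ G.edgeFinset | fe e = 2} := by
  refine card_le_card_of_forall_subsingleton (fun v e => v ∈ e) (fun v hv => ?_)
    fun e he v hv v' hv' => ?_
  · obtain ⟨u, hvu⟩ := hnb v
    simp only [mem_filter, mem_univ, true_and] at hv
    refine ⟨s(v, u), ?_, Sym2.mem_mk_left v u⟩
    simpa [hvu] using h.fe_eq_two_of_fv_ne hvu (by have := hind hvu hv; omega)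
  · induction e using Sym2.ind with
    | _ a b =>
      simp only [Set.mem_ofPred_eq, mem_filter, mem_univ, true_and, Sym2.mem_iff] at hv hv'
      simp only [mem_filter, mem_edgeFinset, mem_edgeSet] at he
      have := hind he.1
      have := hind he.1.symm
      rcases hv.2 with rfl | rfl <;> rcases hv'.2 with rfl | rfl <;> first | rfl | omega

lemma totalClassCard_one_le_two (h : IsExchangeFree G fv fe)
    (hind : ∀ ⦃u v⦄, G.Adj u v → fv u = 1 → fv v = 2) (hnb : ∀ v, ∃ u, G.Adj v u) :
    totalClassCard G fv fe 1 ≤ totalClassCard G fv fe 2 := by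
  have := h.card_filter_fe_eq_one_le hind
  have := h.card_filter_fv_eq_one_le hind hnb
  simp only [totalClassCard, edgeClassCard]
  omega

end IsExchangeFree

lemma add_mod_two_eq_one_of_parity {W : Type*} {t : W → ℕ} {X : Set W} {u v : W}
    (hX : u ∈ X ↔ v ∉ X)
    (hpar : ((∀ v ∈ X, Even (t v)) ∧ ∀ v ∉ X, Odd (t v)) ∨
      ((∀ v ∈ X, Odd (t v)) ∧ ∀ v ∉ X, Even (t v))) :
    (t u + t v) % 2 = 1 := by
  simp only [Nat.even_iff, Nat.odd_iff] at hpar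
  rw [Nat.add_mod]
  by_cases hu : u ∈ X
  · have hv := hX.1 hu
    rcases hpar with ⟨h₁, h₂⟩ | ⟨h₁, h₂⟩ <;> simp [h₁ u hu, h₂ v hv]
  · have hv : v ∈ X := not_not.1 (mt hX.2 hu)
    rcases hpar with ⟨h₁, h₂⟩ | ⟨h₁, h₂⟩ <;> simp [h₁ v hv, h₂ u hu]

/-- Given a connected bipartite graph `G` (bipartition `(X, Xᶜ)`) that is not a star,
and a total `2`-colouring in which one part has all even sums and the other all odd
sums, with at least one `2` used and strictly more `1`'s than `2`'s, there is a total
`2`-colouring with the same parity property using exactly one more `2` (and one fewer `1`). -/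
theorem bipartite_exchange_one_for_two (G : SimpleGraph V) [DecidableRel G.Adj]
    (X : Set V) (hX : ∀ u v : V, G.Adj u v → (u ∈ X ↔ v ∉ X))
    (hconn : G.Connected)
    (hnotstar : ¬ ∃ c : V, ∀ e ∈ G.edgeSet, c ∈ e)
    (fv : V → ℕ) (fe : Sym2 V → ℕ)
    (hcol : IsTotalKColoring G 2 fv fe)
    (hparity : ((∀ v ∈ X, Even (tSum G fv fe v)) ∧ (∀ v ∉ X, Odd (tSum G fv fe v))) ∨
      ((∀ v ∈ X, Odd (tSum G fv fe v)) ∧ (∀ v ∉ X, Even (tSum G fv fe v))))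
    (h2ne : totalClassCard G fv fe 2 ≠ 0)
    (h12 : totalClassCard G fv fe 2 < totalClassCard G fv fe 1) :
    ∃ (fv' : V → ℕ) (fe' : Sym2 V → ℕ),
      IsTotalKColoring G 2 fv' fe' ∧
      (((∀ v ∈ X, Even (tSum G fv' fe' v)) ∧ (∀ v ∉ X, Odd (tSum G fv' fe' v))) ∨
        ((∀ v ∈ X, Odd (tSum G fv' fe' v)) ∧ (∀ v ∉ X, Even (tSum G fv' fe' v)))) ∧
      totalClassCard G fv' fe' 2 = totalClassCard G fv fe 2 + 1 ∧
      totalClassCard G fv' fe' 1 + 1 = totalClassCard G fv fe 1 := by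
  by_cases hex : HasOneForTwoExchange G fv fe
  · obtain ⟨fv', fe', hcol', hpar', h2', h1'⟩ := hex
    refine ⟨fv', fe', hcol', ?_, h2', h1'⟩
    simpa only [Nat.even_iff, Nat.odd_iff, hpar'] using hparity
  have h : IsExchangeFree G fv fe :=
    ⟨hcol, hex, fun u v huv => add_mod_two_eq_one_of_parity (hX u v huv) hparity⟩
  have hind : ∀ ⦃u v⦄, G.Adj u v → fv u = 1 → fv v = 2 := fun _ _ =>
    h.fv_eq_two_of_adj_of_fv_eq_one hconn hnotstar (h.exists_fv_eq_two h2ne)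
  have hnb (v : V) : ∃ u, G.Adj v u := by
    obtain ⟨e, he, -⟩ : ∃ e ∈ G.edgeSet, v ∉ e := by simpa using not_exists.1 hnotstar v
    induction e using Sym2.ind with
    | _ a b =>
      have := (G.mem_edgeSet.1 he).nontrivial
      exact hconn.preconnected.exists_adj_of_nontrivial v
  exact absurd (h.totalClassCard_one_le_two hind hnb) h12.not_ge
end

section
/- Let n ≥ 2 and let γ be a neighbour-sum-distinguishing total 2-colouring of the complete graph K_n such that some vertex v has a monochromatic palette of 1's, i.e., γ(v) = 1 and every edge incident with v is coloured 1. If n = 2k then exactly k(k+1) elements of V(K_n)∪E(K_n) are coloured 1 and exactly k² elements are coloured 2; if n = 2k+1 then exactly (k+1)² elements are coloured 1 and exactly k(k+1) elements are coloured 2. -/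
open Finset

variable {V : Type*} [Fintype V] [DecidableEq V]

/-!
Write `tSum u = 1 + deg u + t u`, where `t u` (`numTwosAt`) is the number of `2`'s among `u`
and its incident edges. In `K_n` the total sums are pairwise distinct, and `t u = n` is
impossible because every vertex other than `v` has a `1`-edge to `v`; so `t` is a bijection
onto `{0, …, n - 1}`. Indexing the vertices by `t`, the graph of `2`-edges has degree `i` or
`i - 1` at vertex `i`, which forces it to be the threshold graph `i ~ j ↔ n ≤ i + j`; hence the
vertices coloured `2` are exactly the `⌊n / 2⌋` ones with `n ≤ 2 i`. Summing `t` gives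
`#(2-vertices) + 2 · #(2-edges) = n (n - 1) / 2`, so colour `2` is used `⌊n² / 4⌋` times and
colour `1` is used `⌊(n + 1)² / 4⌋` times.
-/

namespace Fin

variable {n : ℕ}

lemma card_filter_le_val (c : ℕ) : #{j : Fin n | c ≤ (j : ℕ)} = n - c := by
  have h := card_filter_add_card_filter_not (s := univ) (fun j : Fin n => c ≤ (j : ℕ))
  simp only [not_le, Fin.card_filter_val_lt, card_univ, Fintype.card_fin] at h
  omega

lemma card_filter_ne_le_add_val (i : Fin n) :
    #{j : Fin n | j ≠ i ∧ n ≤ i + j} + (if n ≤ 2 * (i : ℕ) then 1 else 0) = i := by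
  have hcard : #{j : Fin n | n ≤ i + j} = i := by
    simp only [← tsub_le_iff_left, card_filter_le_val]
    omega
  rw [filter_and, filter_ne', erase_inter, univ_inter]
  conv_rhs => rw [← hcard]
  split_ifs with h
  · rw [card_erase_add_one (by simp; omega)]
  · rw [erase_eq_of_notMem (by simp; omega), add_zero]

end Fin

lemma Nat.two_mul_choose_two_add_self (n : ℕ) : 2 * n.choose 2 + n = n ^ 2 := by
  rw [Nat.choose_two_right, Nat.two_mul_div_two_of_even (Nat.even_mul_pred_self n)]
  cases n <;> simp; ring

namespace SimpleGraph

section Threshold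

variable {n : ℕ} (G : SimpleGraph (Fin n)) [DecidableRel G.Adj]

theorem neighborFinset_eq_of_degree_le_le
    (hle : ∀ i : Fin n, G.degree i ≤ i) (hge : ∀ i : Fin n, (i : ℕ) ≤ G.degree i + 1)
    (i : Fin n) : G.neighborFinset i = ({j | j ≠ i ∧ n ≤ i + j} : Finset (Fin n)) := by
  -- Induct along the order `0, n - 1, 1, n - 2, …`: the `i` neighbours of a low vertex `i` are
  -- high vertices treated before it, and the non-neighbours of a high vertex are low vertices
  -- treated before it; the degree bounds then fix the rest of the row.
  induction hm : min (2 * (i : ℕ)) (2 * (n - 1 - i) + 1) using Nat.strong_induction_on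
    generalizing i with
  | _ m ih =>
  have adj_iff : ∀ j : Fin n, min (2 * (j : ℕ)) (2 * (n - 1 - j) + 1) < m →
      (G.Adj i j ↔ i ≠ j ∧ n ≤ j + i) := fun j hj => by
    rw [adj_comm, ← mem_neighborFinset, ih _ hj j rfl, mem_filter]
    simp
  have hcard := Fin.card_filter_ne_le_add_val i
  have hi := i.isLt
  rcases lt_or_ge (2 * (i : ℕ)) n with hlow | hhigh
  · refine (eq_of_subset_of_card_le (fun j hj => ?_) ?_).symm
    · simp only [mem_filter, mem_univ, true_and] at hj
      have hj' := j.isLt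
      rw [mem_neighborFinset, adj_iff j (by omega)]
      exact ⟨Ne.symm hj.1, by omega⟩
    · rw [card_neighborFinset_eq_degree]
      have := hle i
      simp only [hlow.not_ge, if_false] at hcard
      omega
  · refine eq_of_subset_of_card_le (fun j hj => ?_) ?_
    · rw [mem_neighborFinset] at hj
      simp only [mem_filter, mem_univ, true_and]
      refine ⟨(G.ne_of_adj hj).symm, ?_⟩
      by_contra hsum
      have := ((adj_iff j (by omega)).mp hj).2
      omega
    · rw [card_neighborFinset_eq_degree]
      have := hge i
      simp only [hhigh, if_true] at hcard
      omega

theorem degree_add_ite_eq_of_degree_le_le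
    (hle : ∀ i : Fin n, G.degree i ≤ i) (hge : ∀ i : Fin n, (i : ℕ) ≤ G.degree i + 1)
    (i : Fin n) : G.degree i + (if n ≤ 2 * (i : ℕ) then 1 else 0) = i := by
  rw [← card_neighborFinset_eq_degree, neighborFinset_eq_of_degree_le_le G hle hge,
    Fin.card_filter_ne_le_add_val]

end Threshold

section ColourClass

variable {W : Type*}

def colourClass (G : SimpleGraph W) (fe : Sym2 W → ℕ) (c : ℕ) : SimpleGraph W :=
  G.deleteEdges {e | fe e ≠ c}

variable {G : SimpleGraph W} {fe : Sym2 W → ℕ} {c : ℕ}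

@[simp]
lemma colourClass_adj {u w : W} :
    (G.colourClass fe c).Adj u w ↔ G.Adj u w ∧ fe s(u, w) = c := by
  simp [colourClass]

instance [DecidableRel G.Adj] : DecidableRel (G.colourClass fe c).Adj :=
  fun _ _ => decidable_of_iff _ colourClass_adj.symm

lemma neighborFinset_colourClass [Fintype W] [DecidableRel G.Adj] (u : W) :
    (G.colourClass fe c).neighborFinset u = {w ∈ G.neighborFinset u | fe s(u, w) = c} := by
  ext w
  simp

lemma edgeFinset_colourClass [Fintype W] [DecidableEq W] [DecidableRel G.Adj] :
    (G.colourClass fe c).edgeFinset = {e ∈ G.edgeFinset | fe e = c} := by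
  ext e
  induction e using Sym2.ind
  simp

end ColourClass

end SimpleGraph

open SimpleGraph

section TotalColouring

variable {W : Type*} [Fintype W]

def numTwosAt (G : SimpleGraph W) [DecidableRel G.Adj] (fv : W → ℕ) (fe : Sym2 W → ℕ) (u : W) :
    ℕ :=
  (if fv u = 2 then 1 else 0) + (G.colourClass fe 2).degree u

variable {G : SimpleGraph W} [DecidableRel G.Adj] {fv : W → ℕ} {fe : Sym2 W → ℕ}

lemma edgeClassCard_eq_card_edgeFinset_colourClass [DecidableEq W] (c : ℕ) :
    edgeClassCard G fe c = #(G.colourClass fe c).edgeFinset := by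
  rw [edgeClassCard, edgeFinset_colourClass]

lemma vSum_eq_degree_add_degree_colourClass (hfe : ∀ e ∈ G.edgeSet, 1 ≤ fe e ∧ fe e ≤ 2)
    (u : W) : vSum G fe u = G.degree u + (G.colourClass fe 2).degree u := by
  rw [vSum, ← card_neighborFinset_eq_degree, ← card_neighborFinset_eq_degree,
    neighborFinset_colourClass, card_filter, card_eq_sum_ones, ← sum_add_distrib]
  refine sum_congr rfl fun w hw => ?_
  have := hfe s(u, w) ((mem_neighborFinset _ _ _).mp hw)
  split_ifs <;> omega

lemma tSum_eq_one_add_degree_add_numTwosAt (hcol : IsTotalKColoring G 2 fv fe) (u : W) :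
    tSum G fv fe u = 1 + G.degree u + numTwosAt G fv fe u := by
  rw [tSum, numTwosAt, vSum_eq_degree_add_degree_colourClass hcol.2]
  have := hcol.1 u
  split_ifs <;> omega

lemma sum_numTwosAt [DecidableEq W] :
    ∑ u, numTwosAt G fv fe u = #{u | fv u = 2} + 2 * edgeClassCard G fe 2 := by
  rw [edgeClassCard_eq_card_edgeFinset_colourClass, ← sum_degrees_eq_twice_card_edges,
    card_filter, ← sum_add_distrib]
  rfl

lemma totalClassCard_one_add_two [DecidableEq W] (hcol : IsTotalKColoring G 2 fv fe) :
    totalClassCard G fv fe 1 + totalClassCard G fv fe 2 = Fintype.card W + #G.edgeFinset := by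
  have hV := card_filter_add_card_filter_not (s := univ) (fun u => fv u = 1)
  have hE := card_filter_add_card_filter_not (s := G.edgeFinset) (fun e => fe e = 1)
  rw [filter_congr fun u _ => show fv u ≠ 1 ↔ fv u = 2 by have := hcol.1 u; omega,
    card_univ] at hV
  rw [filter_congr fun e he => show fe e ≠ 1 ↔ fe e = 2 by
    have := hcol.2 e (mem_edgeFinset.mp he); omega] at hE
  simp only [totalClassCard, edgeClassCard]
  omega

lemma card_filter_eq_two_of_equiv_fin {n : ℕ} (σ : W ≃ Fin n)
    (hσ : ∀ u, (σ u : ℕ) = numTwosAt G fv fe u) : #{u | fv u = 2} = n / 2 := by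
  set H := (G.colourClass fe 2).comap σ.symm
  have hH : ∀ i, (if fv (σ.symm i) = 2 then 1 else 0) + H.degree i = i := fun i => by
    rw [← (Iso.comap σ.symm _).degree_eq i]
    show numTwosAt G fv fe (σ.symm i) = i
    rw [← hσ, Equiv.apply_symm_apply]
  have hfv : ∀ u, fv u = 2 ↔ (n + 1) / 2 ≤ (σ u : ℕ) := fun u => by
    have := H.degree_add_ite_eq_of_degree_le_le (fun j => by have := hH j; omega)
      (fun j => by have := hH j; split_ifs at this <;> omega) (σ u)
    have := hH (σ u)
    rw [Equiv.symm_apply_apply] at this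
    split_ifs at * <;> omega
  rw [card_equiv σ (t := ({i | (n + 1) / 2 ≤ (i : ℕ)} : Finset (Fin n))) (by simp [hfv]),
    Fin.card_filter_le_val]
  omega

end TotalColouring

section CompleteGraph

variable {W : Type*} [Fintype W] [DecidableEq W] {fv : W → ℕ} {fe : Sym2 W → ℕ}

lemma numTwosAt_injective (hcol : IsTotalKColoring (completeGraph W) 2 fv fe)
    (hnsd : NsdTotal (completeGraph W) fv fe) :
    Function.Injective (numTwosAt (completeGraph W) fv fe) := by
  intro a b hab
  by_contra hne
  apply hnsd hne
  rw [tSum_eq_one_add_degree_add_numTwosAt hcol, tSum_eq_one_add_degree_add_numTwosAt hcol, hab,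
    complete_graph_degree, complete_graph_degree]

lemma numTwosAt_lt_card {v : W} (hv : fv v = 1) (hve : ∀ u, u ≠ v → fe s(v, u) = 1) (u : W) :
    numTwosAt (completeGraph W) fv fe u < Fintype.card W := by
  have hdeg := ((completeGraph W).colourClass fe 2).degree_lt_card_verts u
  rw [numTwosAt]
  split_ifs with hu
  · have huv : u ≠ v := by rintro rfl; omega
    have hnot : ¬ ((completeGraph W).colourClass fe 2).IsUniversal u := fun h => by
      have := (colourClass_adj.mp (h huv)).2
      rw [Sym2.eq_swap, hve u huv] at this
      omega
    have := (degree_lt_card_sub_one _ u).mpr hnot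
    omega
  · omega

lemma exists_equiv_fin_numTwosAt (hcol : IsTotalKColoring (completeGraph W) 2 fv fe)
    (hnsd : NsdTotal (completeGraph W) fv fe) {v : W} (hv : fv v = 1)
    (hve : ∀ u, u ≠ v → fe s(v, u) = 1) :
    ∃ σ : W ≃ Fin (Fintype.card W), ∀ u, (σ u : ℕ) = numTwosAt (completeGraph W) fv fe u := by
  let f : W → Fin (Fintype.card W) := fun u => ⟨_, numTwosAt_lt_card hv hve u⟩
  have hf : Function.Bijective f := by
    rw [Fintype.bijective_iff_injective_and_card, Fintype.card_fin]
    exact ⟨fun a b hab => numTwosAt_injective hcol hnsd (congrArg Fin.val hab), rfl⟩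
  exact ⟨Equiv.ofBijective f hf, fun u => rfl⟩

theorem totalClassCard_completeGraph (hcol : IsTotalKColoring (completeGraph W) 2 fv fe)
    (hnsd : NsdTotal (completeGraph W) fv fe) {v : W} (hv : fv v = 1)
    (hve : ∀ u, u ≠ v → fe s(v, u) = 1) :
    totalClassCard (completeGraph W) fv fe 1 = (Fintype.card W + 1) ^ 2 / 4 ∧
      totalClassCard (completeGraph W) fv fe 2 = Fintype.card W ^ 2 / 4 := by
  obtain ⟨σ, hσ⟩ := exists_equiv_fin_numTwosAt hcol hnsd hv hve
  have hV2 := card_filter_eq_two_of_equiv_fin σ hσ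
  have hsum : ∑ u, numTwosAt (completeGraph W) fv fe u = (Fintype.card W).choose 2 := by
    simp_rw [← hσ]
    rw [Equiv.sum_comp σ (fun i => (i : ℕ)), Fin.sum_univ_eq_sum_range (fun i => i),
      sum_range_id, Nat.choose_two_right]
  have hcount := sum_numTwosAt (G := completeGraph W) (fv := fv) (fe := fe)
  have hpart := totalClassCard_one_add_two hcol
  rw [card_edgeFinset_top_eq_card_choose_two] at hpart
  have hC := Nat.two_mul_choose_two_add_self (Fintype.card W)
  have hsq := add_sq (Fintype.card W) 1
  simp only [totalClassCard] at hpart ⊢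
  omega

end CompleteGraph

theorem nsd_total_two_coloring_class_sizes_general (n : ℕ)
    (fv : Fin n → ℕ) (fe : Sym2 (Fin n) → ℕ)
    (hcol : IsTotalKColoring (SimpleGraph.completeGraph (Fin n)) 2 fv fe)
    (hnsd : NsdTotal (SimpleGraph.completeGraph (Fin n)) fv fe)
    (v : Fin n) (hv : fv v = 1) (hve : ∀ u : Fin n, u ≠ v → fe s(v, u) = 1) :
    (∀ k : ℕ, n = 2 * k →
      totalClassCard (SimpleGraph.completeGraph (Fin n)) fv fe 1 = k * (k + 1) ∧
      totalClassCard (SimpleGraph.completeGraph (Fin n)) fv fe 2 = k ^ 2) ∧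
    (∀ k : ℕ, n = 2 * k + 1 →
      totalClassCard (SimpleGraph.completeGraph (Fin n)) fv fe 1 = (k + 1) ^ 2 ∧
      totalClassCard (SimpleGraph.completeGraph (Fin n)) fv fe 2 = k * (k + 1)) := by
  obtain ⟨h1, h2⟩ := totalClassCard_completeGraph hcol hnsd hv hve
  rw [Fintype.card_fin] at h1 h2
  refine ⟨fun k hk => ?_, fun k hk => ?_⟩ <;> subst hk <;> rw [h1, h2] <;> ring_nf <;> omega

/-- In an nsd total `2`-colouring of `K_n` (`n ≥ 2`) having a vertex with a
monochromatic palette of `1`'s, if `n = 2k` then exactly `k(k+1)` elements are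
coloured `1` and `k²` are coloured `2`, and if `n = 2k+1` then exactly `(k+1)²`
elements are coloured `1` and `k(k+1)` are coloured `2`. -/
theorem nsd_total_two_coloring_class_sizes (n : ℕ) (hn : 2 ≤ n)
    (fv : Fin n → ℕ) (fe : Sym2 (Fin n) → ℕ)
    (hcol : IsTotalKColoring (SimpleGraph.completeGraph (Fin n)) 2 fv fe)
    (hnsd : NsdTotal (SimpleGraph.completeGraph (Fin n)) fv fe)
    (v : Fin n) (hv : fv v = 1) (hve : ∀ u : Fin n, u ≠ v → fe s(v, u) = 1) :
    (∀ k : ℕ, n = 2 * k →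
      totalClassCard (SimpleGraph.completeGraph (Fin n)) fv fe 1 = k * (k + 1) ∧
      totalClassCard (SimpleGraph.completeGraph (Fin n)) fv fe 2 = k ^ 2) ∧
    (∀ k : ℕ, n = 2 * k + 1 →
      totalClassCard (SimpleGraph.completeGraph (Fin n)) fv fe 1 = (k + 1) ^ 2 ∧
      totalClassCard (SimpleGraph.completeGraph (Fin n)) fv fe 2 = k * (k + 1)) :=
  nsd_total_two_coloring_class_sizes_general n fv fe hcol hnsd v hv hve
end

section
/- For every n ≥ 2, in every neighbour-sum-distinguishing total 2-colouring γ of the complete graph K_n there exists a vertex v with a monochromatic palette, i.e., there is a ∈ {1,2} with γ(v) = a and γ(e) = a for every edge e incident with v; moreover, γ cannot simultaneously contain one vertex with a monochromatic palette of 1's and another vertex with a monochromatic palette of 2's. -/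
/-! In `K_n` every total sum lies between `n` and `2n`, and the extreme values are attained
exactly at the vertices whose palette is monochromatic of `1`'s, resp. of `2`'s. The `n` sums
are pairwise distinct, so they cannot all fit among the `n - 1` values strictly in between.
Any two vertices of `K_n` with monochromatic palettes share their edge, hence their colour. -/

open Finset

variable {V : Type*} [Fintype V] [DecidableEq V]

namespace SimpleGraph

def HasMonochromaticPalette {W : Type*} (G : SimpleGraph W) (fv : W → ℕ) (fe : Sym2 W → ℕ)
    (v : W) (a : ℕ) : Prop :=
  fv v = a ∧ ∀ u, G.Adj v u → fe s(v, u) = a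

theorem HasMonochromaticPalette.eq_of_adj {W : Type*} {G : SimpleGraph W} {fv : W → ℕ}
    {fe : Sym2 W → ℕ} {v w : W} {a b : ℕ} (hv : G.HasMonochromaticPalette fv fe v a)
    (hw : G.HasMonochromaticPalette fv fe w b) (hvw : G.Adj v w) : a = b := by
  rw [← hv.2 w hvw, ← hw.2 v hvw.symm, Sym2.eq_swap]

theorem hasMonochromaticPalette_completeGraph_iff {W : Type*} {fv : W → ℕ} {fe : Sym2 W → ℕ}
    {v : W} {a : ℕ} :
    (completeGraph W).HasMonochromaticPalette fv fe v a ↔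
      fv v = a ∧ ∀ u, u ≠ v → fe s(v, u) = a := by
  simp only [HasMonochromaticPalette, top_adj, ne_comm]

theorem HasMonochromaticPalette.eq_of_completeGraph {W : Type*} {fv : W → ℕ}
    {fe : Sym2 W → ℕ} {v w : W} {a b : ℕ} (hv : (completeGraph W).HasMonochromaticPalette fv fe v a)
    (hw : (completeGraph W).HasMonochromaticPalette fv fe w b) : a = b := by
  by_cases hvw : v = w
  · subst hvw
    exact hv.1.symm.trans hw.1
  · exact hv.eq_of_adj hw hvw

end SimpleGraph

open SimpleGraph

namespace IsTotalKColoring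

variable {W : Type*} [Fintype W] {G : SimpleGraph W} [DecidableRel G.Adj] {k : ℕ} {fv : W → ℕ}
  {fe : Sym2 W → ℕ}

theorem degree_le_vSum (h : IsTotalKColoring G k fv fe) (v : W) : G.degree v ≤ vSum G fe v := by
  simpa [vSum] using card_nsmul_le_sum _ (fun u => fe s(v, u)) 1
    fun u hu => (h.2 _ ((G.mem_neighborFinset v u).1 hu)).1

theorem vSum_le (h : IsTotalKColoring G k fv fe) (v : W) : vSum G fe v ≤ k * G.degree v := by
  simpa [vSum, mul_comm] using sum_le_card_nsmul _ (fun u => fe s(v, u)) k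
    fun u hu => (h.2 _ ((G.mem_neighborFinset v u).1 hu)).2

theorem eq_one_of_vSum_eq_degree (h : IsTotalKColoring G k fv fe) {v u : W}
    (hv : vSum G fe v = G.degree v) (hu : G.Adj v u) : fe s(v, u) = 1 :=
  ((sum_eq_sum_iff_of_le (f := fun _ => 1)
      fun w hw => (h.2 _ ((G.mem_neighborFinset v w).1 hw)).1).1
    (by simpa [vSum] using hv.symm) u ((G.mem_neighborFinset v u).2 hu)).symm

theorem eq_of_vSum_eq_mul_degree (h : IsTotalKColoring G k fv fe) {v u : W}
    (hv : vSum G fe v = k * G.degree v) (hu : G.Adj v u) : fe s(v, u) = k :=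
  (sum_eq_sum_iff_of_le (g := fun _ => k)
      fun w hw => (h.2 _ ((G.mem_neighborFinset v w).1 hw)).2).1
    (by simpa [vSum, mul_comm] using hv) u ((G.mem_neighborFinset v u).2 hu)

theorem degree_add_one_le_tSum (h : IsTotalKColoring G k fv fe) (v : W) :
    G.degree v + 1 ≤ tSum G fv fe v :=
  add_comm (G.degree v) 1 ▸ add_le_add (h.1 v).1 (h.degree_le_vSum v)

theorem tSum_le (h : IsTotalKColoring G k fv fe) (v : W) :
    tSum G fv fe v ≤ k * (G.degree v + 1) := by
  have := h.vSum_le v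
  have := (h.1 v).2
  unfold tSum
  linarith

theorem hasMonochromaticPalette_one_of_tSum_eq (h : IsTotalKColoring G k fv fe) {v : W}
    (hv : tSum G fv fe v = G.degree v + 1) : G.HasMonochromaticPalette fv fe v 1 := by
  have := (h.1 v).1
  have := h.degree_le_vSum v
  unfold tSum at hv
  exact ⟨by omega, fun _ hu => h.eq_one_of_vSum_eq_degree (by omega) hu⟩

theorem hasMonochromaticPalette_of_tSum_eq_mul (h : IsTotalKColoring G k fv fe) {v : W}
    (hv : tSum G fv fe v = k * (G.degree v + 1)) : G.HasMonochromaticPalette fv fe v k := by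
  have := (h.1 v).2
  have := h.vSum_le v
  unfold tSum at hv
  rw [mul_add_one] at hv
  exact ⟨by omega, fun _ hu => h.eq_of_vSum_eq_mul_degree (by omega) hu⟩

end IsTotalKColoring

theorem NsdTotal.injective_tSum_completeGraph {fv : V → ℕ} {fe : Sym2 V → ℕ}
    (h : NsdTotal (completeGraph V) fv fe) : Function.Injective (tSum (completeGraph V) fv fe) :=
  fun _ _ huv => by_contra fun hne => h hne huv

theorem exists_hasMonochromaticPalette_of_nsdTotal_completeGraph [Nonempty V] {fv : V → ℕ}
    {fe : Sym2 V → ℕ} (hcol : IsTotalKColoring (completeGraph V) 2 fv fe)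
    (hnsd : NsdTotal (completeGraph V) fv fe) :
    ∃ v a, (a = 1 ∨ a = 2) ∧ (completeGraph V).HasMonochromaticPalette fv fe v a := by
  by_contra! hno
  set n := Fintype.card V with hn
  have hpos : 0 < n := Fintype.card_pos
  have hdeg (v : V) : (completeGraph V).degree v + 1 = n := by
    rw [complete_graph_degree]
    exact Nat.sub_add_cancel hpos
  have hmaps (v : V) : tSum (completeGraph V) fv fe v ∈ Icc (n + 1) (2 * n - 1) := by
    have hlow := hcol.degree_add_one_le_tSum v
    have hhigh := hcol.tSum_le v
    have hne_low := mt hcol.hasMonochromaticPalette_one_of_tSum_eq (hno v 1 (.inl rfl))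
    have hne_high := mt hcol.hasMonochromaticPalette_of_tSum_eq_mul (hno v 2 (.inr rfl))
    rw [hdeg] at hlow hhigh hne_low hne_high
    rw [mem_Icc]
    omega
  have hcard := card_le_card_of_injOn (s := univ) _ (fun v _ => hmaps v)
    hnsd.injective_tSum_completeGraph.injOn
  rw [card_univ, ← hn, Nat.card_Icc] at hcard
  omega

/-- Every nsd total `2`-colouring of `K_n` (`n ≥ 2`) has a vertex with a
monochromatic palette (its own colour and the colours of all its incident edges
are all equal to some `a ∈ {1,2}`); moreover, it cannot contain both a vertex with
a monochromatic palette of `1`'s and a vertex with a monochromatic palette of `2`'s. -/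
theorem nsd_total_two_coloring_monochromatic_palette (n : ℕ) (hn : 2 ≤ n)
    (fv : Fin n → ℕ) (fe : Sym2 (Fin n) → ℕ)
    (hcol : IsTotalKColoring (SimpleGraph.completeGraph (Fin n)) 2 fv fe)
    (hnsd : NsdTotal (SimpleGraph.completeGraph (Fin n)) fv fe) :
    (∃ (v : Fin n) (a : ℕ), (a = 1 ∨ a = 2) ∧ fv v = a ∧
      ∀ u : Fin n, u ≠ v → fe s(v, u) = a) ∧
    ¬ ((∃ v : Fin n, fv v = 1 ∧ ∀ u : Fin n, u ≠ v → fe s(v, u) = 1) ∧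
       (∃ w : Fin n, fv w = 2 ∧ ∀ u : Fin n, u ≠ w → fe s(w, u) = 2)) := by
  have : Nonempty (Fin n) := ⟨⟨0, by omega⟩⟩
  simp only [← hasMonochromaticPalette_completeGraph_iff]
  refine ⟨exists_hasMonochromaticPalette_of_nsdTotal_completeGraph hcol hnsd, ?_⟩
  rintro ⟨⟨v, hv⟩, ⟨w, hw⟩⟩
  exact absurd (hv.eq_of_completeGraph hw) (by decide)
end

section
/- Every path P with an even number ℓ ≥ 2 of edges admits a neighbour-sum-distinguishing edge 2-colouring using colours 1 and 2 that uses each colour exactly ℓ/2 times; and for every path P with an odd number ℓ ≥ 3 of edges and every colour c ∈ {1,2}, P admits a neighbour-sum-distinguishing edge 2-colouring in which colour c is used exactly (ℓ+1)/2 times and the other colour exactly (ℓ−1)/2 times. In particular every path with at least 2 edges admits an equitable neighbour-sum-distinguishing edge 2-colouring. -/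
open Finset

variable {V : Type*} [Fintype V] [DecidableEq V]

instance (n : ℕ) : DecidableRel (SimpleGraph.pathGraph n).Adj := fun a b =>
  decidable_of_iff (a.val + 1 = b.val ∨ b.val + 1 = a.val) SimpleGraph.pathGraph_adj.symm

section PathNsdAux

/-- The colour pattern: `t, 3-t, 3-t, t` repeating with period 4. -/
def pat (t i : ℕ) : ℕ := if i % 4 = 0 ∨ i % 4 = 3 then t else 3 - t

/-- The edge colouring of the path induced by the pattern `pat t`. -/
def γpat (n t : ℕ) : Sym2 (Fin n) → ℕ :=
  Sym2.lift ⟨fun a b => pat t (min a.val b.val), fun a b => by simp [min_comm]⟩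

lemma γpat_mk (n t : ℕ) (a b : Fin n) : γpat n t s(a, b) = pat t (min a.val b.val) := rfl

lemma pat_one_le {t : ℕ} (ht : t = 1 ∨ t = 2) (i : ℕ) : 1 ≤ pat t i := by
  unfold pat; split_ifs <;> omega

lemma pat_le_two {t : ℕ} (ht : t = 1 ∨ t = 2) (i : ℕ) : pat t i ≤ 2 := by
  unfold pat; split_ifs <;> omega

lemma pat_alt {t : ℕ} (ht : t = 1 ∨ t = 2) (i : ℕ) : pat t i ≠ pat t (i + 2) := by
  unfold pat; split_ifs <;> omega

lemma nbr_zero {ℓ : ℕ} (hℓ : 2 ≤ ℓ) (v : Fin (ℓ + 1)) (hv : v.val = 0) :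
    (SimpleGraph.pathGraph (ℓ + 1)).neighborFinset v = {(⟨1, by omega⟩ : Fin (ℓ + 1))} := by
  ext u; simp [SimpleGraph.mem_neighborFinset, SimpleGraph.pathGraph_adj, Fin.ext_iff]; omega

lemma nbr_last {ℓ : ℕ} (hℓ : 2 ≤ ℓ) (v : Fin (ℓ + 1)) (hv : v.val = ℓ) :
    (SimpleGraph.pathGraph (ℓ + 1)).neighborFinset v = {(⟨ℓ - 1, by omega⟩ : Fin (ℓ + 1))} := by
  ext u; simp [SimpleGraph.mem_neighborFinset, SimpleGraph.pathGraph_adj, Fin.ext_iff]; omega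

lemma nbr_mid {ℓ : ℕ} (v : Fin (ℓ + 1)) (h0 : 0 < v.val) (h1 : v.val < ℓ) :
    (SimpleGraph.pathGraph (ℓ + 1)).neighborFinset v =
      {(⟨v.val - 1, by omega⟩ : Fin (ℓ + 1)), (⟨v.val + 1, by omega⟩ : Fin (ℓ + 1))} := by
  ext u; simp [SimpleGraph.mem_neighborFinset, SimpleGraph.pathGraph_adj, Fin.ext_iff]; omega

lemma vSum_zero {ℓ t : ℕ} (hℓ : 2 ≤ ℓ) (v : Fin (ℓ + 1)) (hv : v.val = 0) :
    vSum (SimpleGraph.pathGraph (ℓ + 1)) (γpat (ℓ + 1) t) v = pat t 0 := by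
  rw [vSum, nbr_zero hℓ v hv, Finset.sum_singleton, γpat_mk]
  congr 1; simp only [Fin.val_mk]; omega

lemma vSum_last {ℓ t : ℕ} (hℓ : 2 ≤ ℓ) (v : Fin (ℓ + 1)) (hv : v.val = ℓ) :
    vSum (SimpleGraph.pathGraph (ℓ + 1)) (γpat (ℓ + 1) t) v = pat t (ℓ - 1) := by
  rw [vSum, nbr_last hℓ v hv, Finset.sum_singleton, γpat_mk]
  congr 1; simp only [Fin.val_mk]; omega

lemma vSum_mid {ℓ t : ℕ} (v : Fin (ℓ + 1)) (h0 : 0 < v.val) (h1 : v.val < ℓ) :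
    vSum (SimpleGraph.pathGraph (ℓ + 1)) (γpat (ℓ + 1) t) v
      = pat t (v.val - 1) + pat t v.val := by
  rw [vSum, nbr_mid v h0 h1, Finset.sum_pair (by simp only [ne_eq, Fin.mk.injEq]; omega),
    γpat_mk, γpat_mk]
  congr 1 <;> · congr 1; simp only [Fin.val_mk]; omega

lemma nsd_step {ℓ t : ℕ} (hℓ : 2 ≤ ℓ) (ht : t = 1 ∨ t = 2) (u v : Fin (ℓ + 1))
    (h : u.val + 1 = v.val) :
    vSum (SimpleGraph.pathGraph (ℓ + 1)) (γpat (ℓ + 1) t) u ≠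
    vSum (SimpleGraph.pathGraph (ℓ + 1)) (γpat (ℓ + 1) t) v := by
  have hvle : v.val ≤ ℓ := by omega
  rcases Nat.eq_zero_or_pos u.val with hu0 | hu0
  · have hv1 : v.val = 1 := by omega
    rw [vSum_zero hℓ u hu0, vSum_mid v (by omega) (by omega), hv1]
    have := pat_one_le ht 1
    simp only [Nat.sub_self]
    omega
  · rcases Nat.lt_or_ge v.val ℓ with hvl | hvl
    · rw [vSum_mid u hu0 (by omega), vSum_mid v (by omega) (by omega)]
      have halt := pat_alt ht (u.val - 1)
      have h1 : u.val - 1 + 2 = v.val := by omega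
      have h2 : v.val - 1 = u.val := by omega
      rw [h1] at halt; rw [h2]
      omega
    · have hv : v.val = ℓ := by omega
      rw [vSum_mid u hu0 (by omega), vSum_last hℓ v hv]
      have h2 : ℓ - 1 = u.val := by omega
      have := pat_one_le ht (u.val - 1)
      rw [h2]; omega

lemma nsd_pat {ℓ t : ℕ} (hℓ : 2 ≤ ℓ) (ht : t = 1 ∨ t = 2) :
    NsdEdge (SimpleGraph.pathGraph (ℓ + 1)) (γpat (ℓ + 1) t) := by
  intro u v hadj
  rcases SimpleGraph.pathGraph_adj.mp hadj with h | h
  · exact nsd_step hℓ ht u v h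
  · exact (nsd_step hℓ ht v u h).symm

lemma edgeClassCard_eq {ℓ t c : ℕ} :
    edgeClassCard (SimpleGraph.pathGraph (ℓ + 1)) (γpat (ℓ + 1) t) c
      = ((Finset.range ℓ).filter (fun i => pat t i = c)).card := by
  rw [edgeClassCard]
  refine (Finset.card_bij
    (fun a ha => s((⟨a, by have := (Finset.mem_range.mp (Finset.mem_filter.mp ha).1); omega⟩ :
                      Fin (ℓ + 1)),
                   (⟨a + 1, by have := (Finset.mem_range.mp (Finset.mem_filter.mp ha).1); omega⟩ :
                      Fin (ℓ + 1))))
    ?_ ?_ ?_).symm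
  · intro a ha
    obtain ⟨har, hac⟩ := Finset.mem_filter.mp ha
    refine Finset.mem_filter.mpr ⟨?_, ?_⟩
    · rw [SimpleGraph.mem_edgeFinset, SimpleGraph.mem_edgeSet, SimpleGraph.pathGraph_adj]
      left; simp
    · rw [γpat_mk]
      simpa using hac
  · intro a ha b hb hab
    rw [Sym2.eq_iff] at hab
    rcases hab with ⟨h1, h2⟩ | ⟨h1, h2⟩ <;>
      simp only [Fin.mk.injEq] at h1 h2 <;> omega
  · intro e he
    obtain ⟨hee, hec⟩ := Finset.mem_filter.mp he
    rw [SimpleGraph.mem_edgeFinset] at hee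
    induction e using Sym2.ind with
    | _ x y =>
      rw [SimpleGraph.mem_edgeSet, SimpleGraph.pathGraph_adj] at hee
      rw [γpat_mk] at hec
      rcases hee with h | h
      · refine ⟨x.val, Finset.mem_filter.mpr ⟨Finset.mem_range.mpr (by omega), ?_⟩, ?_⟩
        · rw [← hec]; congr 1; omega
        · beta_reduce
          rw [Sym2.eq_iff]; left
          refine ⟨?_, ?_⟩ <;> · apply Fin.ext; simp only [Fin.val_mk]; try omega
      · refine ⟨y.val, Finset.mem_filter.mpr ⟨Finset.mem_range.mpr (by omega), ?_⟩, ?_⟩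
        · rw [← hec]; congr 1; omega
        · beta_reduce
          rw [Sym2.eq_iff]; right
          refine ⟨?_, ?_⟩ <;> · apply Fin.ext; simp only [Fin.val_mk]; try omega

lemma count_main (n : ℕ) :
    ((Finset.range n).filter (fun i => i % 4 = 0 ∨ i % 4 = 3)).card = (n + 3) / 4 + n / 4 := by
  induction n with
  | zero => simp
  | succ n ih =>
    rw [Finset.range_add_one, Finset.filter_insert]
    by_cases h : n % 4 = 0 ∨ n % 4 = 3
    · rw [if_pos h, Finset.card_insert_of_notMem (by simp), ih]; omega
    · rw [if_neg h, ih]; omega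

lemma count_pat_t {t : ℕ} (ht : t = 1 ∨ t = 2) (n : ℕ) :
    ((Finset.range n).filter (fun i => pat t i = t)).card = (n + 3) / 4 + n / 4 := by
  rw [← count_main n]
  apply Finset.card_bij (fun a _ => a) ?_ (fun _ _ _ _ h => h) (fun b hb => ⟨b, ?_, rfl⟩)
  · intro a ha
    obtain ⟨h1, h2⟩ := Finset.mem_filter.mp ha
    refine Finset.mem_filter.mpr ⟨h1, ?_⟩
    revert h2; unfold pat; split_ifs with h <;> simp [h] <;> omega
  · obtain ⟨h1, h2⟩ := Finset.mem_filter.mp hb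
    refine Finset.mem_filter.mpr ⟨h1, ?_⟩
    unfold pat; rw [if_pos h2]

lemma count_pat_other {t : ℕ} (ht : t = 1 ∨ t = 2) (n : ℕ) :
    ((Finset.range n).filter (fun i => pat t i = 3 - t)).card = n - ((n + 3) / 4 + n / 4) := by
  have key : ((Finset.range n).filter (fun i => pat t i = t)).card
      + ((Finset.range n).filter (fun i => pat t i = 3 - t)).card = n := by
    have heq : (Finset.range n).filter (fun i => pat t i = 3 - t)
        = (Finset.range n).filter (fun i => ¬ (pat t i = t)) := by
      apply Finset.filter_congr
      intro i _
      unfold pat; split_ifs with h <;> simp <;> omega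
    rw [heq, Finset.card_filter_add_card_filter_not, Finset.card_range]
  rw [count_pat_t ht n] at key
  omega

lemma coloring_pat {ℓ t : ℕ} (ht : t = 1 ∨ t = 2) :
    IsEdgeKColoring (SimpleGraph.pathGraph (ℓ + 1)) 2 (γpat (ℓ + 1) t) := by
  intro e _
  induction e using Sym2.ind with
  | _ x y => exact ⟨pat_one_le ht _, pat_le_two ht _⟩

lemma master {ℓ t : ℕ} (hℓ : 2 ≤ ℓ) (ht : t = 1 ∨ t = 2) :
    IsEdgeKColoring (SimpleGraph.pathGraph (ℓ + 1)) 2 (γpat (ℓ + 1) t) ∧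
    NsdEdge (SimpleGraph.pathGraph (ℓ + 1)) (γpat (ℓ + 1) t) ∧
    edgeClassCard (SimpleGraph.pathGraph (ℓ + 1)) (γpat (ℓ + 1) t) t = (ℓ + 3) / 4 + ℓ / 4 ∧
    edgeClassCard (SimpleGraph.pathGraph (ℓ + 1)) (γpat (ℓ + 1) t) (3 - t)
      = ℓ - ((ℓ + 3) / 4 + ℓ / 4) :=
  ⟨coloring_pat ht, nsd_pat hℓ ht,
    by rw [edgeClassCard_eq, count_pat_t ht], by rw [edgeClassCard_eq, count_pat_other ht]⟩

end PathNsdAux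


/-- For a path with an even number `ℓ ≥ 2` of edges there is an nsd edge `2`-colouring
using each colour exactly `ℓ/2` times; for a path with an odd number `ℓ ≥ 3` of edges
and any colour `c ∈ {1,2}`, there is an nsd edge `2`-colouring using `c` exactly
`(ℓ+1)/2` times and the other colour `(ℓ−1)/2` times.  In particular every path with
at least `2` edges admits an equitable nsd edge `2`-colouring. -/
theorem path_equitable_nsd_two_coloring (ℓ : ℕ) (hℓ : 2 ≤ ℓ) :
    (Even ℓ → ∃ γ : Sym2 (Fin (ℓ + 1)) → ℕ,
      IsEdgeKColoring (SimpleGraph.pathGraph (ℓ + 1)) 2 γ ∧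
      NsdEdge (SimpleGraph.pathGraph (ℓ + 1)) γ ∧
      edgeClassCard (SimpleGraph.pathGraph (ℓ + 1)) γ 1 = ℓ / 2 ∧
      edgeClassCard (SimpleGraph.pathGraph (ℓ + 1)) γ 2 = ℓ / 2) ∧
    (Odd ℓ → ∀ c : ℕ, c = 1 ∨ c = 2 → ∃ γ : Sym2 (Fin (ℓ + 1)) → ℕ,
      IsEdgeKColoring (SimpleGraph.pathGraph (ℓ + 1)) 2 γ ∧
      NsdEdge (SimpleGraph.pathGraph (ℓ + 1)) γ ∧
      edgeClassCard (SimpleGraph.pathGraph (ℓ + 1)) γ c = (ℓ + 1) / 2 ∧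
      edgeClassCard (SimpleGraph.pathGraph (ℓ + 1)) γ (3 - c) = (ℓ - 1) / 2) ∧
    HasEqNsdEdge (SimpleGraph.pathGraph (ℓ + 1)) 2 := by
  have heven : Even ℓ → ∃ γ : Sym2 (Fin (ℓ + 1)) → ℕ,
      IsEdgeKColoring (SimpleGraph.pathGraph (ℓ + 1)) 2 γ ∧
      NsdEdge (SimpleGraph.pathGraph (ℓ + 1)) γ ∧
      edgeClassCard (SimpleGraph.pathGraph (ℓ + 1)) γ 1 = ℓ / 2 ∧
      edgeClassCard (SimpleGraph.pathGraph (ℓ + 1)) γ 2 = ℓ / 2 := by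
    intro he
    obtain ⟨k, hk⟩ := he
    obtain ⟨h1, h2, h3, h4⟩ := master (ℓ := ℓ) (t := 1) hℓ (Or.inl rfl)
    have e32 : (3 : ℕ) - 1 = 2 := rfl
    rw [e32] at h4
    exact ⟨γpat (ℓ + 1) 1, h1, h2, by rw [h3]; omega, by rw [h4]; omega⟩
  have hodd : Odd ℓ → ∀ c : ℕ, c = 1 ∨ c = 2 → ∃ γ : Sym2 (Fin (ℓ + 1)) → ℕ,
      IsEdgeKColoring (SimpleGraph.pathGraph (ℓ + 1)) 2 γ ∧
      NsdEdge (SimpleGraph.pathGraph (ℓ + 1)) γ ∧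
      edgeClassCard (SimpleGraph.pathGraph (ℓ + 1)) γ c = (ℓ + 1) / 2 ∧
      edgeClassCard (SimpleGraph.pathGraph (ℓ + 1)) γ (3 - c) = (ℓ - 1) / 2 := by
    intro ho c hc
    obtain ⟨k, hk⟩ := ho
    have hmod : ℓ % 4 = 1 ∨ ℓ % 4 = 3 := by omega
    rcases hmod with hm | hm
    · -- use t = c : colour c gets (ℓ+3)/4 + ℓ/4 = (ℓ+1)/2
      obtain ⟨h1, h2, h3, h4⟩ := master (ℓ := ℓ) (t := c) hℓ hc
      exact ⟨γpat (ℓ + 1) c, h1, h2, by rw [h3]; omega, by rw [h4]; omega⟩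
    · -- use t = 3 - c
      have hc' : 3 - c = 1 ∨ 3 - c = 2 := by omega
      obtain ⟨h1, h2, h3, h4⟩ := master (ℓ := ℓ) (t := 3 - c) hℓ hc'
      have e33 : 3 - (3 - c) = c := by omega
      rw [e33] at h4
      exact ⟨γpat (ℓ + 1) (3 - c), h1, h2, by rw [h4]; omega, by rw [h3]; omega⟩
  refine ⟨heven, hodd, ?_⟩
  have key : ∃ γ : Sym2 (Fin (ℓ + 1)) → ℕ,
      IsEdgeKColoring (SimpleGraph.pathGraph (ℓ + 1)) 2 γ ∧
      NsdEdge (SimpleGraph.pathGraph (ℓ + 1)) γ ∧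
      edgeClassCard (SimpleGraph.pathGraph (ℓ + 1)) γ 1 + 1
        ≥ edgeClassCard (SimpleGraph.pathGraph (ℓ + 1)) γ 2 ∧
      edgeClassCard (SimpleGraph.pathGraph (ℓ + 1)) γ 2 + 1
        ≥ edgeClassCard (SimpleGraph.pathGraph (ℓ + 1)) γ 1 := by
    rcases Nat.even_or_odd ℓ with he | ho
    · obtain ⟨γ, h1, h2, h3, h4⟩ := heven he
      exact ⟨γ, h1, h2, by omega, by omega⟩
    · obtain ⟨γ, h1, h2, h3, h4⟩ := hodd ho 1 (Or.inl rfl)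
      have e32 : (3 : ℕ) - 1 = 2 := rfl
      rw [e32] at h4
      exact ⟨γ, h1, h2, by omega, by omega⟩
  obtain ⟨γ, h1, h2, h3, h4⟩ := key
  refine ⟨γ, h1, h2, ?_⟩
  intro i hi j hj
  rw [Finset.mem_Icc] at hi hj
  obtain ⟨hi1, hi2⟩ := hi
  obtain ⟨hj1, hj2⟩ := hj
  interval_cases i <;> interval_cases j <;> omega
end
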